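/- arXiv:math/9908173 — 7 statements merged into one kernel-verified Lean document; each statement's English description precedes it below -/
import Mathlib

section
/- Let g ≥ 2 be an integer and let A be a finite non-solvable group satisfying 2√g(√g+1)² < |A| ≤ 12(g−1). Then g = 6 and A is isomorphic to the alternating group A₅ (in particular |A| = 60). -/
/-!
Writing `s = √g`, one has `2√g(√g+1)² = (2g+2)s + 4g`, and comparing squares shows that this
exceeds `12g − 14` for every `g ≥ 2` and is smaller than `12(g − 1)` only for `5 ≤ g ≤ 8`. Hence
`|A| ∈ {12g − 13, 12g − 12}`, one of `47, 48, 59, 60, 71, 72, 83, 84`.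

Groups of all these orders except `60` are solvable by Sylow theory: either a Sylow subgroup is
forced to be normal, or the kernel of the conjugation action on the Sylow subgroups lies in a
solvable normalizer. The same arguments, together with counting elements of order `3` and `5` in
order `30`, show that all proper divisors of `60` are solvable orders, so a non-solvable group of
order `60` is simple. In a simple group of order `60` every proper subgroup has index at least `5`,
and Sylow counting produces a subgroup of index exactly `5`: the normalizer of a Sylow
`2`-subgroup, or that of an involution lying in two Sylow `2`-subgroups. The action on its cosets
embeds the group into `S₅` as a subgroup of index `2`, which can only be `A₅`.
-/

universe u

theorem two_mul_sqrt_mul_sqrt_add_one_sq {x : ℝ} (hx : 0 ≤ x) :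
    2 * √x * (√x + 1) ^ 2 = (2 * x + 2) * √x + 4 * x := by
  linear_combination (2 * √x + 4) * Real.sq_sqrt hx

theorem lt_mul_sqrt_of_sq_lt {a b x : ℝ} (ha : 0 ≤ a) (h : b ^ 2 < a ^ 2 * x) : b < a * √x := by
  rw [← Real.sqrt_sq ha, ← Real.sqrt_mul (sq_nonneg a)]
  exact Real.lt_sqrt_of_sq_lt h

theorem le_mul_sqrt_of_sq_le {a b x : ℝ} (ha : 0 ≤ a) (h : b ^ 2 ≤ a ^ 2 * x) : b ≤ a * √x := by
  rw [← Real.sqrt_sq ha, ← Real.sqrt_mul (sq_nonneg a)]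
  exact (le_abs_self b).trans (Real.abs_le_sqrt h)

theorem genus_bounds {g n : ℕ} (hg : 2 ≤ g) (hlt : 2 * √g * (√g + 1) ^ 2 < n)
    (hle : (n : ℝ) ≤ 12 * ((g : ℝ) - 1)) : 5 ≤ g ∧ g ≤ 8 ∧ 12 * g - 13 ≤ n ∧ n ≤ 12 * g - 12 := by
  rw [two_mul_sqrt_mul_sqrt_add_one_sq (Nat.cast_nonneg g)] at hlt
  have hcoef : (0 : ℝ) ≤ 2 * g + 2 := by positivity
  have hlower : 8 * (g : ℝ) - 14 < (2 * g + 2) * √g := by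
    refine lt_mul_sqrt_of_sq_lt hcoef ?_
    rcases le_or_gt g 8 with h8 | h9
    · interval_cases g <;> norm_num
    · -- `g (g + 1)² - (4g - 7)² = (g - 9)(g² - 5g + 12) + 59`
      have h9' : (9 : ℝ) ≤ g := by exact_mod_cast h9
      nlinarith [mul_nonneg (sub_nonneg.2 h9') (by nlinarith : (0 : ℝ) ≤ g ^ 2 - 5 * g + 12)]
  have hmid : 5 ≤ g ∧ g ≤ 8 := by
    by_contra! hout
    have hupper : 8 * (g : ℝ) - 12 ≤ (2 * g + 2) * √g := by
      refine le_mul_sqrt_of_sq_le hcoef ?_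
      rcases le_or_gt g 4 with h4 | h9
      · interval_cases g <;> norm_num
      · -- `g (g + 1)² - (4g - 6)² = (g - 1)(g - 4)(g - 9)`
        have h9' : (9 : ℝ) ≤ g := by exact_mod_cast hout h9
        nlinarith [mul_nonneg (mul_nonneg (sub_nonneg.2 h9') (by linarith : (0 : ℝ) ≤ g - 4))
          (by linarith : (0 : ℝ) ≤ g - 1)]
    linarith
  refine ⟨hmid.1, hmid.2, ?_, ?_⟩
  · have : (12 * g : ℝ) - 14 < n := by linarith
    have : 12 * (g : ℤ) - 14 < n := by exact_mod_cast this
    omega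
  · have : 12 * (g : ℤ) - 12 ≥ n := by
      have : (n : ℝ) ≤ 12 * g - 12 := by linarith
      exact_mod_cast this
    omega

def SolvableOrder (n : ℕ) : Prop :=
  ∀ (G : Type u) [Group G], Nat.card G = n → Group.IsSolvable G

theorem solvableOrder_prime_pow {p : ℕ} (hp : p.Prime) (k : ℕ) : SolvableOrder.{u} (p ^ k) := by
  intro G _ hG
  have := Fact.mk hp
  have : Finite G := Nat.finite_of_card_ne_zero (hG ▸ (pow_pos hp.pos k).ne')
  have := (IsPGroup.of_card hG).isNilpotent
  exact IsNilpotent.to_isSolvable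

theorem solvableOrder_prime {p : ℕ} (hp : p.Prime) : SolvableOrder.{u} p := by
  simpa using solvableOrder_prime_pow hp 1

theorem Sylow.normal_of_card_eq_one {G : Type u} [Group G] [Finite G] {p : ℕ} (P : Sylow p G)
    (h : Nat.card (Sylow p G) = 1) : (P : Subgroup G).Normal :=
  have := Finite.card_le_one_iff_subsingleton.mp h.le
  P.normal_of_subsingleton

theorem isSolvable_of_sylow_action {G : Type u} [Group G] {p : ℕ} (P : Sylow p G)
    (hS : Group.IsSolvable (Equiv.Perm (Sylow p G)))
    (hN : Group.IsSolvable (Subgroup.normalizer (P : Set G))) : Group.IsSolvable G := by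
  set f := MulAction.toPermHom G (Sylow p G)
  have hker : f.ker ≤ Subgroup.normalizer (P : Set G) := fun g hg => by
    rw [← Sylow.smul_eq_iff_mem_normalizer]
    exact congr($hg P)
  have := Group.isSolvable_of_isSolvable_injective (Subgroup.inclusion_injective hker)
  exact Group.isSolvable_of_ker_le_range f.ker.subtype f (by simp)

section Sylow

variable {G : Type u} [Group G] [Finite G] {p : ℕ} [Fact p.Prime]

theorem Sylow.card_eq_pow_of_card_eq_pow_mul (P : Sylow p G) {k m : ℕ}
    (hG : Nat.card G = p ^ k * m) (hm : ¬ p ∣ m) : Nat.card P = p ^ k := by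
  have hp : p.Prime := Fact.out
  have hm0 : m ≠ 0 := by rintro rfl; exact hm (dvd_zero p)
  rw [P.card_eq_multiplicity, hG, Nat.factorization_mul (pow_ne_zero k hp.ne_zero) hm0,
    Finsupp.add_apply, hp.factorization_pow, Finsupp.single_eq_same,
    Nat.factorization_eq_zero_of_not_dvd hm, add_zero]

theorem Sylow.index_eq_of_card_eq_pow_mul (P : Sylow p G) {k m : ℕ}
    (hG : Nat.card G = p ^ k * m) (hm : ¬ p ∣ m) : P.index = m := by
  have h := (P : Subgroup G).card_mul_index
  rw [P.card_eq_pow_of_card_eq_pow_mul hG hm, hG] at h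
  exact Nat.eq_of_mul_eq_mul_left (pow_pos (Fact.out : p.Prime).pos k) h

theorem card_sylow_mem_of_card_eq_pow_mul {k m : ℕ} (hG : Nat.card G = p ^ k * m)
    (hm : ¬ p ∣ m) : Nat.card (Sylow p G) ∈ m.divisors.filter (· % p = 1) := by
  obtain ⟨P⟩ := (inferInstance : Nonempty (Sylow p G))
  have hm0 : m ≠ 0 := by rintro rfl; exact hm (dvd_zero p)
  have hmod := card_sylow_modEq_one p G
  rw [Nat.ModEq, Nat.one_mod_eq_one.mpr (Fact.out : p.Prime).ne_one] at hmod
  simpa [hm0, hmod] using P.index_eq_of_card_eq_pow_mul hG hm ▸ P.card_dvd_index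

theorem Sylow.card_mul_card_normalizer (P : Sylow p G) :
    Nat.card (Sylow p G) * Nat.card (Subgroup.normalizer (P : Set G)) = Nat.card G := by
  rw [P.card_eq_index_normalizer, Subgroup.index_mul_card]

theorem isSolvable_of_normal_sylow (P : Sylow p G) [(P : Subgroup G).Normal]
    (hQ : SolvableOrder.{u} P.index) : Group.IsSolvable G :=
  have := P.isPGroup'.isNilpotent
  (Group.isSolvable_iff_subgroup_quotient (P : Subgroup G)).2
    ⟨IsNilpotent.to_isSolvable, hQ _ P.index_eq_card.symm⟩

theorem Sylow.pairwise_disjoint_of_card_eq_prime (h : ∀ P : Sylow p G, Nat.card P = p) :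
    Pairwise (Function.onFun Disjoint fun P : Sylow p G => (P : Subgroup G)) := by
  intro P Q hPQ
  rw [Function.onFun, disjoint_iff]
  have hd : Nat.card ↥((P : Subgroup G) ⊓ Q) ∣ p := by
    simpa [h P] using Subgroup.card_dvd_of_le (inf_le_left : (P : Subgroup G) ⊓ Q ≤ P)
  rcases (Nat.dvd_prime Fact.out).1 hd with h1 | hp
  · exact Subgroup.eq_bot_of_card_eq _ h1
  · refine absurd (Sylow.ext ?_) hPQ
    have hP : (P : Subgroup G) ⊓ Q = P :=
      Subgroup.eq_of_le_of_card_ge inf_le_left (by rw [hp, h P])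
    exact Subgroup.eq_of_le_of_card_ge (hP ▸ inf_le_right) (by rw [h P, h Q])

end Sylow

section Counting

variable {G : Type u} [Group G] [Finite G]

theorem sum_card_sub_one_add_one_le {ι : Type*} [Fintype ι] (H : ι → Subgroup G)
    (hH : Pairwise (Function.onFun Disjoint H)) : ∑ i, (Nat.card (H i) - 1) + 1 ≤ Nat.card G := by
  classical
  have := Fintype.ofFinite G
  let S : ι → Finset G := fun i => (H i : Set G).toFinset.erase 1
  have hS : ∀ i, (S i).card = Nat.card (H i) - 1 := fun i => by
    simp [S, Finset.card_erase_of_mem]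
  have hdisj : ((Finset.univ : Finset ι) : Set ι).PairwiseDisjoint S := fun i _ j _ hij => by
    refine Finset.disjoint_left.2 fun x hi hj => ?_
    simp only [S, Finset.mem_erase, Set.mem_toFinset, SetLike.mem_coe] at hi hj
    exact hi.1 ((Subgroup.disjoint_def.1 (hH hij)) hi.2 hj.2)
  calc ∑ i, (Nat.card (H i) - 1) + 1 = (insert 1 (Finset.univ.biUnion S)).card := by
        rw [Finset.card_insert_of_notMem (by simp [S]), Finset.card_biUnion hdisj]
        simp only [hS]
    _ ≤ Nat.card G := by rw [Nat.card_eq_fintype_card]; exact Finset.card_le_univ _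

theorem card_sylow_mul_add_card_sylow_mul_add_one_le {p q : ℕ} [Fact p.Prime] [Fact q.Prime]
    (hpq : p ≠ q) {a b : ℕ} (ha : ∀ P : Sylow p G, Nat.card P = a)
    (hb : ∀ Q : Sylow q G, Nat.card Q = b)
    (hp : Pairwise (Function.onFun Disjoint fun P : Sylow p G => (P : Subgroup G)))
    (hq : Pairwise (Function.onFun Disjoint fun Q : Sylow q G => (Q : Subgroup G))) :
    Nat.card (Sylow p G) * (a - 1) + Nat.card (Sylow q G) * (b - 1) + 1 ≤ Nat.card G := by
  have := Fintype.ofFinite (Sylow p G)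
  have := Fintype.ofFinite (Sylow q G)
  have h := sum_card_sub_one_add_one_le
    (Sum.elim (fun P : Sylow p G => (P : Subgroup G)) fun Q : Sylow q G => (Q : Subgroup G)) ?_
  · simpa [Fintype.sum_sum_type, ha, hb, Nat.card_eq_fintype_card, mul_comm] using h
  · rintro (P | Q) (P' | Q') h
    · exact hp (ne_of_apply_ne Sum.inl h)
    · exact IsPGroup.disjoint_of_ne p q hpq _ _ P.isPGroup' Q'.isPGroup'
    · exact (IsPGroup.disjoint_of_ne p q hpq _ _ P'.isPGroup' Q.isPGroup').symm
    · exact hq (ne_of_apply_ne Sum.inr h)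

end Counting

theorem SolvableOrder.pow_mul {p m : ℕ} (hp : p.Prime) (hm : ¬ p ∣ m)
    (hdiv : m.divisors.filter (· % p = 1) = {1}) (hsm : SolvableOrder.{u} m) (k : ℕ) :
    SolvableOrder.{u} (p ^ k * m) := by
  intro G _ hG
  have := Fact.mk hp
  have : Finite G := Nat.finite_of_card_ne_zero <| hG ▸
    mul_ne_zero (pow_ne_zero k hp.ne_zero) (by rintro rfl; exact hm (dvd_zero p))
  obtain ⟨P⟩ := (inferInstance : Nonempty (Sylow p G))
  have hn := card_sylow_mem_of_card_eq_pow_mul hG hm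
  rw [hdiv, Finset.mem_singleton] at hn
  have := P.normal_of_card_eq_one hn
  exact isSolvable_of_normal_sylow P (P.index_eq_of_card_eq_pow_mul hG hm ▸ hsm)

theorem solvableOrder_six : SolvableOrder.{u} 6 :=
  (SolvableOrder.pow_mul Nat.prime_three (m := 2) (by decide) (by decide)
    (solvableOrder_prime Nat.prime_two) 1 :)

theorem solvableOrder_two_pow_mul_three (k : ℕ) : SolvableOrder.{u} (2 ^ k * 3) := by
  intro G _ hG
  have : Finite G := Nat.finite_of_card_ne_zero (by simp [hG])
  have := Fact.mk Nat.prime_two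
  obtain ⟨P⟩ := (inferInstance : Nonempty (Sylow 2 G))
  have hn := card_sylow_mem_of_card_eq_pow_mul hG (by decide)
  rw [show (Nat.divisors 3).filter (· % 2 = 1) = {1, 3} by decide] at hn
  rcases Finset.mem_insert.1 hn with hn | hn
  · have := P.normal_of_card_eq_one hn
    exact isSolvable_of_normal_sylow P
      (P.index_eq_of_card_eq_pow_mul hG (by decide) ▸ solvableOrder_prime Nat.prime_three)
  · rw [Finset.mem_singleton] at hn
    have hN := P.card_mul_card_normalizer
    rw [hn, hG, mul_comm] at hN
    exact isSolvable_of_sylow_action P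
      (solvableOrder_six _ (by rw [Nat.card_perm, hn]; rfl))
      (solvableOrder_prime_pow Nat.prime_two k _ (Nat.eq_of_mul_eq_mul_right (by norm_num) hN))

theorem solvableOrder_ten : SolvableOrder.{u} 10 :=
  (SolvableOrder.pow_mul Nat.prime_five (m := 2) (by decide) (by decide)
    (solvableOrder_prime Nat.prime_two) 1 :)

theorem solvableOrder_seventy_two : SolvableOrder.{u} 72 := by
  intro G _ hG
  have : Finite G := Nat.finite_of_card_ne_zero (by simp [hG])
  have := Fact.mk Nat.prime_three
  obtain ⟨P⟩ := (inferInstance : Nonempty (Sylow 3 G))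
  replace hG : Nat.card G = 3 ^ 2 * 8 := hG
  have hn := card_sylow_mem_of_card_eq_pow_mul hG (by decide)
  rw [show (Nat.divisors 8).filter (· % 3 = 1) = {1, 4} by decide] at hn
  rcases Finset.mem_insert.1 hn with hn | hn
  · have := P.normal_of_card_eq_one hn
    exact isSolvable_of_normal_sylow P
      (P.index_eq_of_card_eq_pow_mul hG (by decide) ▸ solvableOrder_prime_pow Nat.prime_two 3)
  · rw [Finset.mem_singleton] at hn
    have hN := P.card_mul_card_normalizer
    rw [hn, hG] at hN
    exact isSolvable_of_sylow_action P
      (solvableOrder_two_pow_mul_three 3 _ (by rw [Nat.card_perm, hn]; rfl))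
      (SolvableOrder.pow_mul Nat.prime_three (m := 2) (by decide) (by decide)
        (solvableOrder_prime Nat.prime_two) 2 _ (by omega))

theorem solvableOrder_eighty_four : SolvableOrder.{u} 84 :=
  (SolvableOrder.pow_mul Nat.prime_seven (m := 12) (by decide) (by decide)
    (solvableOrder_two_pow_mul_three 2) 1 :)

theorem solvableOrder_thirty : SolvableOrder.{u} 30 := by
  intro G _ hG
  have : Finite G := Nat.finite_of_card_ne_zero (by simp [hG])
  have := Fact.mk Nat.prime_five
  have := Fact.mk Nat.prime_three
  have hG5 : Nat.card G = 5 ^ 1 * 6 := hG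
  have hG3 : Nat.card G = 3 ^ 1 * 10 := hG
  obtain ⟨P⟩ := (inferInstance : Nonempty (Sylow 5 G))
  obtain ⟨Q⟩ := (inferInstance : Nonempty (Sylow 3 G))
  have h5 := card_sylow_mem_of_card_eq_pow_mul hG5 (by decide)
  have h3 := card_sylow_mem_of_card_eq_pow_mul hG3 (by decide)
  rw [show (Nat.divisors 6).filter (· % 5 = 1) = {1, 6} by decide] at h5
  rw [show (Nat.divisors 10).filter (· % 3 = 1) = {1, 10} by decide] at h3
  simp only [Finset.mem_insert, Finset.mem_singleton] at h5 h3
  rcases h5 with h5 | h5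
  · have := P.normal_of_card_eq_one h5
    exact isSolvable_of_normal_sylow P
      (P.index_eq_of_card_eq_pow_mul hG5 (by decide) ▸ solvableOrder_six)
  rcases h3 with h3 | h3
  · have := Q.normal_of_card_eq_one h3
    exact isSolvable_of_normal_sylow Q
      (Q.index_eq_of_card_eq_pow_mul hG3 (by decide) ▸ solvableOrder_ten)
  have hc5 (P : Sylow 5 G) : Nat.card P = 5 := by
    simpa using P.card_eq_pow_of_card_eq_pow_mul hG5 (by decide)
  have hc3 (Q : Sylow 3 G) : Nat.card Q = 3 := by
    simpa using Q.card_eq_pow_of_card_eq_pow_mul hG3 (by decide)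
  have := card_sylow_mul_add_card_sylow_mul_add_one_le (by decide) hc5 hc3
    (Sylow.pairwise_disjoint_of_card_eq_prime hc5) (Sylow.pairwise_disjoint_of_card_eq_prime hc3)
  rw [h5, h3, hG] at this
  omega

theorem solvableOrder_of_dvd_sixty {d : ℕ} (hd : d ∣ 60) (h60 : d ≠ 60) :
    SolvableOrder.{u} d := by
  have hd' : d ∈ Nat.divisors 60 := Nat.mem_divisors.2 ⟨hd, by norm_num⟩
  rw [show Nat.divisors 60 = {1, 2, 3, 4, 5, 6, 10, 12, 15, 20, 30, 60} by decide] at hd'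
  simp only [Finset.mem_insert, Finset.mem_singleton] at hd'
  rcases hd' with rfl | rfl | rfl | rfl | rfl | rfl | rfl | rfl | rfl | rfl | rfl | rfl
  · exact (solvableOrder_prime_pow Nat.prime_two 0 :)
  · exact solvableOrder_prime Nat.prime_two
  · exact solvableOrder_prime Nat.prime_three
  · exact (solvableOrder_prime_pow Nat.prime_two 2 :)
  · exact solvableOrder_prime Nat.prime_five
  · exact solvableOrder_six
  · exact solvableOrder_ten
  · exact (solvableOrder_two_pow_mul_three 2 :)
  · exact (SolvableOrder.pow_mul Nat.prime_five (m := 3) (by decide) (by decide)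
      (solvableOrder_prime Nat.prime_three) 1 :)
  · exact (SolvableOrder.pow_mul Nat.prime_five (m := 4) (by decide) (by decide)
      (solvableOrder_prime_pow Nat.prime_two 2) 1 :)
  · exact solvableOrder_thirty
  · exact absurd rfl h60

theorem isSimpleGroup_of_not_isSolvable {G : Type u} [Group G] [Finite G]
    (hd : ∀ d, d ∣ Nat.card G → d ≠ Nat.card G → SolvableOrder.{u} d)
    (hns : ¬ Group.IsSolvable G) : IsSimpleGroup G := by
  have : Nontrivial G := by
    by_contra h
    rw [not_nontrivial_iff_subsingleton] at h
    exact hns inferInstance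
  refine { toNontrivial := this, eq_bot_or_eq_top_of_normal := fun N _ => ?_ }
  by_contra! hN
  have hmul := N.card_mul_index
  have hcard : Nat.card N ≠ Nat.card G := fun h => hN.2 ((Subgroup.card_eq_iff_eq_top N).1 h)
  have hindex : N.index ≠ Nat.card G := fun h => hN.1 <| N.eq_bot_of_card_eq <| by
    rw [h] at hmul
    exact (Nat.mul_eq_right Nat.card_pos.ne').1 hmul
  rw [N.index_eq_card] at hindex hmul
  exact hns <| (Group.isSolvable_iff_subgroup_quotient N).2
    ⟨hd _ (Dvd.intro _ hmul) hcard _ rfl, hd _ (Dvd.intro_left _ hmul) hindex _ rfl⟩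

namespace IsSimpleGroup

variable {G : Type u} [Group G] [IsSimpleGroup G]

theorem injective_toPermHom_quotient {H : Subgroup G} (hH : H ≠ ⊤) :
    Function.Injective (MulAction.toPermHom G (G ⧸ H)) := by
  rw [← MonoidHom.ker_eq_bot_iff, ← Subgroup.normalCore_eq_ker]
  refine (eq_bot_or_eq_top_of_normal _ H.normalCore_normal).resolve_right fun h => hH ?_
  exact top_le_iff.1 (h ▸ H.normalCore_le)

theorem normalizer_ne_top {H : Subgroup G} (h₁ : H ≠ ⊥) (h₂ : H ≠ ⊤) :
    Subgroup.normalizer (H : Set G) ≠ ⊤ := fun h =>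
  (eq_bot_or_eq_top_of_normal H (Subgroup.normalizer_eq_top_iff.1 h)).elim h₁ h₂

variable [Finite G]

theorem card_dvd_factorial_index {H : Subgroup G} (hH : H ≠ ⊤) :
    Nat.card G ∣ H.index.factorial := by
  have := Subgroup.card_dvd_of_injective _ (injective_toPermHom_quotient hH)
  rwa [Nat.card_perm, ← Subgroup.index_eq_card] at this

theorem nonempty_mulEquiv_alternatingGroup {n : ℕ} {H : Subgroup G} (hH : H.index = n)
    (hG : 2 * Nat.card G = n.factorial) : Nonempty (G ≃* alternatingGroup (Fin n)) := by
  have hH' : H ≠ ⊤ := by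
    rintro rfl
    rw [Subgroup.index_top] at hH
    subst hH
    rw [Nat.factorial_one] at hG
    omega
  let e : G ⧸ H ≃ Fin n := Finite.equivFinOfCardEq (H.index_eq_card ▸ hH)
  let f := (Equiv.permCongrHom e).toMonoidHom.comp (MulAction.toPermHom G (G ⧸ H))
  have hf : Function.Injective f :=
    (Equiv.permCongrHom e).injective.comp (injective_toPermHom_quotient hH')
  have hrange : f.range = alternatingGroup (Fin n) := by
    apply Equiv.Perm.eq_alternatingGroup_of_index_eq_two
    have := f.range.card_mul_index
    rw [← Nat.card_congr (MonoidHom.ofInjective hf).toEquiv, Nat.card_perm, Nat.card_fin,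
      ← hG, mul_comm 2] at this
    exact Nat.eq_of_mul_eq_mul_left Nat.card_pos this
  exact ⟨(MonoidHom.ofInjective hf).trans (MulEquiv.subgroupCongr hrange)⟩

theorem five_le_index (hG : 24 < Nat.card G) {H : Subgroup G} (hH : H ≠ ⊤) : 5 ≤ H.index := by
  by_contra! hlt
  have := (Nat.le_of_dvd (Nat.factorial_pos _) (card_dvd_factorial_index hH)).trans
    (Nat.factorial_le (Nat.le_of_lt_succ hlt))
  exact absurd (hG.trans_le this) (by decide)

theorem five_le_index_normalizer (hG : 24 < Nat.card G) {H : Subgroup G} (h₁ : Nat.card H ≠ 1)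
    (h₂ : Nat.card H ≠ Nat.card G) : 5 ≤ (Subgroup.normalizer (H : Set G)).index :=
  five_le_index hG <| normalizer_ne_top (mt (Subgroup.card_eq_one).2 h₁)
    (mt (Subgroup.card_eq_iff_eq_top H).2 h₂)

theorem exists_index_eq_five_of_not_disjoint (hG : Nat.card G = 60) {P Q : Sylow 2 G}
    (hPQ : P ≠ Q) (h : ¬ Disjoint (P : Subgroup G) Q) : ∃ H : Subgroup G, H.index = 5 := by
  have := Fact.mk Nat.prime_two
  have hc (R : Sylow 2 G) : Nat.card R = 2 ^ 2 :=
    R.card_eq_pow_of_card_eq_pow_mul (show Nat.card G = 2 ^ 2 * 15 from hG) (by decide)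
  rw [Subgroup.disjoint_def] at h
  push Not at h
  obtain ⟨g, hgP, hgQ, hg⟩ := h
  set N := Subgroup.normalizer (Subgroup.zpowers g : Set G)
  -- A Sylow `2`-subgroup has order `4`, so it is abelian and centralizes each of its elements.
  have hle (R : Sylow 2 G) (hgR : g ∈ R) : (R : Subgroup G) ≤ N :=
    have := IsPGroup.isMulCommutative_of_card_eq_prime_sq (hc R)
    (Subgroup.le_centralizer_iff_isMulCommutative.2 this).trans <|
      (Subgroup.centralizer_le (SetLike.coe_subset_coe.2 (Subgroup.zpowers_le.2 hgR))).trans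
        (Subgroup.centralizer_le_normalizer _)
  have hN4 : Nat.card N ≠ 4 := fun h4 => hPQ <| Sylow.ext <|
    (Subgroup.eq_of_le_of_card_ge (hle P hgP) (by rw [h4, hc P]; rfl)).trans
      (Subgroup.eq_of_le_of_card_ge (hle Q hgQ) (by rw [h4, hc Q]; rfl)).symm
  obtain ⟨c, hc4⟩ : 4 ∣ Nat.card N := by simpa [hc P] using Subgroup.card_dvd_of_le (hle P hgP)
  have hgP4 := Subgroup.card_dvd_of_le (Subgroup.zpowers_le.2 hgP)
  rw [hc P] at hgP4
  have h5 : 5 ≤ N.index := five_le_index_normalizer (by omega) (H := Subgroup.zpowers g)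
    (by rw [Nat.card_zpowers]; exact mt orderOf_eq_one_iff.1 hg)
    (fun h => by rw [h, hG] at hgP4; norm_num at hgP4)
  have hmul := N.card_mul_index
  rw [hc4, hG, mul_assoc] at hmul
  have hi : N.index ∈ Nat.divisors 15 :=
    Nat.mem_divisors.2 ⟨Dvd.intro_left c (by omega), by norm_num⟩
  rw [show Nat.divisors 15 = {1, 3, 5, 15} by decide] at hi
  simp only [Finset.mem_insert, Finset.mem_singleton] at hi
  refine ⟨N, ?_⟩
  rcases hi with hi | hi | hi | hi
  · omega
  · omega
  · exact hi
  · rw [hi] at hmul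
    omega

theorem exists_index_eq_five (hG : Nat.card G = 60) : ∃ H : Subgroup G, H.index = 5 := by
  have := Fact.mk Nat.prime_two
  have := Fact.mk Nat.prime_five
  have hG2 : Nat.card G = 2 ^ 2 * 15 := hG
  have hG5 : Nat.card G = 5 ^ 1 * 12 := hG
  have hc2 (P : Sylow 2 G) : Nat.card P = 2 ^ 2 := P.card_eq_pow_of_card_eq_pow_mul hG2 (by decide)
  have hc5 (P : Sylow 5 G) : Nat.card P = 5 := by
    simpa using P.card_eq_pow_of_card_eq_pow_mul hG5 (by decide)
  obtain ⟨P⟩ := (inferInstance : Nonempty (Sylow 2 G))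
  obtain ⟨R⟩ := (inferInstance : Nonempty (Sylow 5 G))
  have h2 := card_sylow_mem_of_card_eq_pow_mul hG2 (by decide)
  have h5 := card_sylow_mem_of_card_eq_pow_mul hG5 (by decide)
  rw [show (Nat.divisors 15).filter (· % 2 = 1) = {1, 3, 5, 15} by decide] at h2
  rw [show (Nat.divisors 12).filter (· % 5 = 1) = {1, 6} by decide] at h5
  simp only [Finset.mem_insert, Finset.mem_singleton] at h2 h5
  have h2' : 5 ≤ Nat.card (Sylow 2 G) := by
    rw [P.card_eq_index_normalizer]
    exact five_le_index_normalizer (by omega) (by rw [hc2 P]; decide) (by rw [hc2 P, hG]; decide)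
  have h5' : 5 ≤ Nat.card (Sylow 5 G) := by
    rw [R.card_eq_index_normalizer]
    exact five_le_index_normalizer (by omega) (by rw [hc5 R]; decide) (by rw [hc5 R, hG]; decide)
  obtain h2 | h2 : Nat.card (Sylow 2 G) = 5 ∨ Nat.card (Sylow 2 G) = 15 := by omega
  · exact ⟨_, P.card_eq_index_normalizer.symm.trans h2⟩
  by_contra hno
  have hdisj : Pairwise (Function.onFun Disjoint fun P : Sylow 2 G => (P : Subgroup G)) :=
    fun P Q hPQ => by_contra fun h => hno (exists_index_eq_five_of_not_disjoint hG hPQ h)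
  -- `15 · 3 + 6 · 4 + 1 > 60`
  have := card_sylow_mul_add_card_sylow_mul_add_one_le (by decide) hc2 hc5 hdisj
    (Sylow.pairwise_disjoint_of_card_eq_prime hc5)
  rw [h2, show Nat.card (Sylow 5 G) = 6 by omega, hG] at this
  norm_num at this

end IsSimpleGroup

theorem nonempty_mulEquiv_alternatingGroup_five {G : Type u} [Group G]
    (hG : Nat.card G = 60) (hns : ¬ Group.IsSolvable G) :
    Nonempty (G ≃* alternatingGroup (Fin 5)) := by
  have : Finite G := Nat.finite_of_card_ne_zero (by simp [hG])
  have := isSimpleGroup_of_not_isSolvable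
    (fun d hd h60 => solvableOrder_of_dvd_sixty (hG ▸ hd) (hG ▸ h60)) hns
  obtain ⟨H, hH⟩ := IsSimpleGroup.exists_index_eq_five hG
  exact IsSimpleGroup.nonempty_mulEquiv_alternatingGroup hH (by rw [hG]; rfl)

theorem genus_six_icosahedral_general {A : Type*} [Group A] (g : ℕ) (hg : 2 ≤ g)
    (hns : ¬ IsSolvable A)
    (hlt : 2 * Real.sqrt g * (Real.sqrt g + 1) ^ 2 < (Nat.card A : ℝ))
    (hle : (Nat.card A : ℝ) ≤ 12 * ((g : ℝ) - 1)) :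
    g = 6 ∧ Nonempty (A ≃* alternatingGroup (Fin 5)) := by
  obtain ⟨hg5, hg8, hlo, hhi⟩ := genus_bounds hg hlt hle
  have hcard (n : ℕ) (hn : SolvableOrder n) : Nat.card A ≠ n := fun h => hns (hn A h)
  interval_cases g
  · have := hcard 47 (solvableOrder_prime (by norm_num))
    have := hcard 48 (solvableOrder_two_pow_mul_three 4)
    omega
  · have := hcard 59 (solvableOrder_prime (by norm_num))
    exact ⟨rfl, nonempty_mulEquiv_alternatingGroup_five (by omega) hns⟩
  · have := hcard 71 (solvableOrder_prime (by norm_num))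
    have := hcard 72 solvableOrder_seventy_two
    omega
  · have := hcard 83 (solvableOrder_prime (by norm_num))
    have := hcard 84 solvableOrder_eighty_four
    omega

/-- If `g ≥ 2` and `A` is a finite non-solvable group with
`2√g(√g+1)² < |A| ≤ 12(g−1)`, then `g = 6` and `A ≅ A₅`. -/
theorem genus_six_icosahedral {A : Type*} [Group A] [Finite A] (g : ℕ) (hg : 2 ≤ g)
    (hns : ¬ IsSolvable A)
    (hlt : 2 * Real.sqrt g * (Real.sqrt g + 1) ^ 2 < (Nat.card A : ℝ))
    (hle : (Nat.card A : ℝ) ≤ 12 * ((g : ℝ) - 1)) :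
    g = 6 ∧ Nonempty (A ≃* alternatingGroup (Fin 5)) :=
  genus_six_icosahedral_general g hg hns hlt hle
end

section
/- Let K be an algebraically closed field of characteristic p > 0, let H be a finite subgroup of PGL(2,K) acting on the projective line P¹(K) by fractional linear transformations, and let x ∈ P¹(K) be a point whose H-orbit contains at least two points. Then there exists a nontrivial element γ' ∈ H such that no fixed point of γ' on P¹(K) belongs to the orbit H·x. -/
open scoped LinearAlgebra.Projectivization

noncomputable section

variable {K : Type*} [Field K]

/-- The projective line over a field `K`. -/
abbrev ProjLine (K : Type*) [Field K] : Type _ := ℙ K (Fin 2 → K)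

/-- `PGL(2,K)`: the quotient of `GL(2,K)` by its center. -/
abbrev ProjectiveGL2 (K : Type*) [Field K] : Type _ :=
  GL (Fin 2) K ⧸ Subgroup.center (GL (Fin 2) K)

/-- The permutation of the projective line induced by a linear automorphism of `K²`. -/
def projPerm (e : (Fin 2 → K) ≃ₗ[K] (Fin 2 → K)) : Equiv.Perm (ProjLine K) where
  toFun := Projectivization.map e.toLinearMap e.injective
  invFun := Projectivization.map e.symm.toLinearMap e.symm.injective
  left_inv x := by
    induction x using Projectivization.ind with
    | h v hv =>
      rw [Projectivization.map_mk, Projectivization.map_mk]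
      exact (Projectivization.mk_eq_mk_iff' K _ _ _ _).2 ⟨1, by simp⟩
  right_inv x := by
    induction x using Projectivization.ind with
    | h v hv =>
      rw [Projectivization.map_mk, Projectivization.map_mk]
      exact (Projectivization.mk_eq_mk_iff' K _ _ _ _).2 ⟨1, by simp⟩

theorem projPerm_mk (e : (Fin 2 → K) ≃ₗ[K] (Fin 2 → K)) (v : Fin 2 → K) (hv : v ≠ 0) :
    projPerm e (Projectivization.mk K v hv) =
      Projectivization.mk K (e v) (by simpa using hv) :=
  Projectivization.map_mk e.toLinearMap e.injective v hv

/-- The action of `GL(2,K)` on the projective line by fractional linear (Möbius)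
transformations, as a homomorphism to the permutation group of `ℙ¹(K)`. -/
def mobiusGL : GL (Fin 2) K →* Equiv.Perm (ProjLine K) where
  toFun g := projPerm (Matrix.GeneralLinearGroup.toLin g).toLinearEquiv
  map_one' := by
    ext x
    induction x using Projectivization.ind with
    | h v hv =>
      rw [Equiv.Perm.coe_one, id_eq, projPerm_mk]
      exact (Projectivization.mk_eq_mk_iff' K _ _ _ _).2 ⟨1, by simp⟩
  map_mul' g h := by
    ext x
    induction x using Projectivization.ind with
    | h v hv =>
      rw [Equiv.Perm.coe_mul, Function.comp_apply, projPerm_mk, projPerm_mk, projPerm_mk]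
      refine (Projectivization.mk_eq_mk_iff' K _ _ _ _).2 ⟨1, ?_⟩
      rw [one_smul, map_mul]
      rfl

theorem center_le_ker_mobiusGL :
    Subgroup.center (GL (Fin 2) K) ≤ (mobiusGL (K := K)).ker := by
  intro g hg
  have hcomm : ∀ t : Matrix.TransvectionStruct (Fin 2) K,
      Commute t.toMatrix (g : Matrix (Fin 2) (Fin 2) K) := by
    intro t
    have hdet : IsUnit t.toMatrix.det := by
      rw [Matrix.TransvectionStruct.det]; exact isUnit_one
    obtain ⟨u, hu⟩ := (Matrix.isUnit_iff_isUnit_det _).2 hdet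
    have hc := Subgroup.mem_center_iff.mp hg u
    calc t.toMatrix * (g : Matrix (Fin 2) (Fin 2) K)
        = ((u * g : GL (Fin 2) K) : Matrix (Fin 2) (Fin 2) K) := by rw [← hu]; rfl
      _ = ((g * u : GL (Fin 2) K) : Matrix (Fin 2) (Fin 2) K) := by rw [hc]
      _ = (g : Matrix (Fin 2) (Fin 2) K) * t.toMatrix := by rw [← hu]; rfl
  obtain ⟨r, hr⟩ := Matrix.mem_range_scalar_of_commute_transvectionStruct hcomm
  have hr0 : r ≠ 0 := by
    rintro rfl
    have hu : IsUnit (g : Matrix (Fin 2) (Fin 2) K) := Units.isUnit g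
    rw [← hr, map_zero] at hu
    have := (Matrix.isUnit_iff_isUnit_det _).1 hu
    rw [Matrix.det_zero] at this
    simp at this
  rw [MonoidHom.mem_ker]
  ext x
  induction x using Projectivization.ind with
  | h v hv =>
    rw [Equiv.Perm.coe_one, id_eq]
    show projPerm _ _ = _
    rw [projPerm_mk]
    refine (Projectivization.mk_eq_mk_iff' K _ _ _ _).2 ⟨r, ?_⟩
    have happ : (Matrix.GeneralLinearGroup.toLin g).toLinearEquiv v =
        Matrix.mulVec (g : Matrix (Fin 2) (Fin 2) K) v := rfl
    rw [happ, ← hr]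
    ext i
    rw [Pi.smul_apply, Matrix.scalar_apply, Matrix.mulVec_diagonal, smul_eq_mul]

/-- The action of `PGL(2,K)` on the projective line `ℙ¹(K)` by fractional linear (Möbius)
transformations. -/
def mobiusPGL : ProjectiveGL2 K →* Equiv.Perm (ProjLine K) :=
  QuotientGroup.lift _ mobiusGL center_le_ker_mobiusGL

end

/-! The group `H` acts transitively on the finite orbit `H·x`, which has at least two points.
By Jordan's theorem, a finite group acting transitively on a set with at least two points contains
an element without fixed points; that element is the required `γ'`. -/

namespace MulAction

variable {G X : Type*} [Group G] [MulAction G X]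

/- Jordan: by Burnside's lemma the numbers of fixed points average to the number of orbits, `1`;
the identity alone contributes `|X| ≥ 2`, so some `g ≠ 1` contributes `0`. -/
theorem exists_ne_one_forall_smul_ne_of_isPretransitive [Finite G] [IsPretransitive G X]
    [Nontrivial X] : ∃ g : G, g ≠ 1 ∧ ∀ y : X, g • y ≠ y := by
  classical
  obtain ⟨_⟩ := (pretransitive_iff_unique_quotient_of_nonempty G X).1 ‹_›
  have : Finite X := Finite.of_finite_mulAction_orbitRel_quotient G X
  have := Fintype.ofFinite G
  have := Fintype.ofFinite X
  by_contra! hfix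
  have hburnside := sum_card_fixedBy_eq_card_orbits_mul_card_group G X
  rw [Fintype.card_unique, one_mul, ← Finset.add_sum_erase _ _ (Finset.mem_univ 1)] at hburnside
  have hfix_one : Fintype.card (fixedBy X (1 : G)) = Fintype.card X := by
    simp [fixedBy_one_eq_univ]
  have hfix_pos : ∀ g ∈ Finset.univ.erase (1 : G), 1 ≤ Fintype.card (fixedBy X g) := by
    intro g hg
    obtain ⟨y, hy⟩ := hfix g (Finset.ne_of_mem_erase hg)
    exact Fintype.card_pos_iff.2 ⟨⟨y, hy⟩⟩
  have hsum := Finset.card_nsmul_le_sum _ _ 1 hfix_pos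
  rw [Finset.card_erase_of_mem (Finset.mem_univ 1), Finset.card_univ, smul_eq_mul, mul_one] at hsum
  have := Fintype.one_lt_card (α := X)
  have := Fintype.card_pos (α := G)
  omega

theorem exists_ne_one_forall_mem_orbit_smul_ne [Finite G] {x : X} (h : (orbit G x).Nontrivial) :
    ∃ g : G, g ≠ 1 ∧ ∀ y ∈ orbit G x, g • y ≠ y := by
  have : Nontrivial (orbit G x) := Set.nontrivial_coe_sort.2 h
  obtain ⟨g, hg1, hg⟩ := exists_ne_one_forall_smul_ne_of_isPretransitive (G := G) (X := orbit G x)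
  exact ⟨g, hg1, fun y hy hgy => hg ⟨y, hy⟩ (Subtype.ext hgy)⟩

end MulAction

theorem Subgroup.exists_ne_one_forall_fixed_notMem_orbit {G X : Type*} [Group G]
    (ρ : G →* Equiv.Perm X) (H : Subgroup G) [Finite H] (x : X)
    (horb : {y | ∃ h ∈ H, ρ h x = y}.Nontrivial) :
    ∃ g ∈ H, g ≠ 1 ∧ ∀ y, ρ g y = y → y ∉ {y | ∃ h ∈ H, ρ h x = y} := by
  let _ : MulAction H X := MulAction.compHom X (ρ.comp H.subtype)
  have horbit : MulAction.orbit H x = {y | ∃ h ∈ H, ρ h x = y} := by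
    ext y
    exact ⟨fun ⟨g, hg⟩ => ⟨g, g.2, hg⟩, fun ⟨h, hh, hy⟩ => ⟨⟨h, hh⟩, hy⟩⟩
  obtain ⟨g, hg1, hg⟩ := MulAction.exists_ne_one_forall_mem_orbit_smul_ne (horbit ▸ horb)
  exact ⟨g, g.2, by simpa using hg1, fun y hy hyx => hg y (horbit ▸ hyx) hy⟩

theorem exists_elt_with_fixed_points_off_orbit_general
    {K : Type*} [Field K]
    (H : Subgroup (ProjectiveGL2 K)) (hH : Finite H)
    (x : ProjLine K)
    (horb : {y : ProjLine K | ∃ h ∈ H, mobiusPGL h x = y}.Nontrivial) :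
    ∃ γ' ∈ H, γ' ≠ 1 ∧
      ∀ y : ProjLine K, mobiusPGL γ' y = y →
        y ∉ {y : ProjLine K | ∃ h ∈ H, mobiusPGL h x = y} :=
  Subgroup.exists_ne_one_forall_fixed_notMem_orbit mobiusPGL H x horb

/-- key claim in the proof of Lemma 3.4: if `H` is a finite subgroup of
`PGL(2,K)` (`K` algebraically closed of characteristic `p > 0`) acting on `ℙ¹(K)` by
fractional linear transformations and `x ∈ ℙ¹(K)` has an `H`-orbit with at least two
points, then some nontrivial `γ' ∈ H` has none of its fixed points in the orbit `H·x`. -/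
theorem exists_elt_with_fixed_points_off_orbit {p : ℕ} [Fact p.Prime]
    {K : Type*} [Field K] [IsAlgClosed K] [CharP K p]
    (H : Subgroup (ProjectiveGL2 K)) (hH : Finite H)
    (x : ProjLine K)
    (horb : {y : ProjLine K | ∃ h ∈ H, mobiusPGL h x = y}.Nontrivial) :
    ∃ γ' ∈ H, γ' ≠ 1 ∧
      ∀ y : ProjLine K, mobiusPGL γ' y = y →
        y ∉ {y : ProjLine K | ∃ h ∈ H, mobiusPGL h x = y} :=
  exists_elt_with_fixed_points_off_orbit_general H hH x horb
end

section
/- Let g ≥ 2 be an integer and A a positive integer. Let λ = gcd(g−1, A) and write g−1 = λ·a and A = λ·b. Suppose there exists a real number λ₀ with 1 ≤ λ₀ ≤ λ such that λ₀·a + 1 ≥ 6 and λ₀·b ≤ F(λ₀·a + 1), where F(x) = 2√x(√x+1)². Then A ≤ F(g). -/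
/-- Lemma 6.2 of the paper. Let `g ≥ 2`, `A ≥ 1`, `λ = gcd(g−1, A)`,
`g−1 = λ·a`, `A = λ·b`. If there is a real `λ₀` with `1 ≤ λ₀ ≤ λ`, `λ₀·a + 1 ≥ 6` and
`λ₀·b ≤ F(λ₀·a + 1)` where `F(x) = 2√x(√x+1)²`, then `A ≤ F(g)`. -/
theorem bound_criterion (g A a b : ℕ) (hg : 2 ≤ g) (hA : 1 ≤ A)
    (ha : g - 1 = Nat.gcd (g - 1) A * a) (hb : A = Nat.gcd (g - 1) A * b)
    (lam0 : ℝ) (hlam0_one : 1 ≤ lam0) (hlam0_le : lam0 ≤ (Nat.gcd (g - 1) A : ℝ))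
    (hsix : 6 ≤ lam0 * a + 1)
    (hcrit : lam0 * b ≤
      2 * Real.sqrt (lam0 * a + 1) * (Real.sqrt (lam0 * a + 1) + 1) ^ 2) :
    (A : ℝ) ≤ 2 * Real.sqrt g * (Real.sqrt g + 1) ^ 2 := by
  set L : ℝ := (Nat.gcd (g - 1) A : ℝ) with hL
  -- cast facts
  have hg1 : 1 ≤ g - 1 := by omega
  have hacast : (g : ℝ) - 1 = L * a := by
    have := congrArg (Nat.cast : ℕ → ℝ) ha
    push_cast [Nat.cast_sub (by omega : 1 ≤ g)] at this
    linarith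
  have hbcast : (A : ℝ) = L * b := by
    have := congrArg (Nat.cast : ℕ → ℝ) hb
    push_cast at this; linarith
  have ha0 : (0:ℝ) ≤ a := Nat.cast_nonneg a
  have hL1 : (1:ℝ) ≤ L := le_trans hlam0_one hlam0_le
  set s := Real.sqrt (lam0 * a + 1) with hs
  set t := Real.sqrt g with ht
  have hs2 : s ^ 2 = lam0 * a + 1 := Real.sq_sqrt (by linarith)
  have ht2 : t ^ 2 = (g : ℝ) := Real.sq_sqrt (by positivity)
  have hsnn : 0 ≤ s := Real.sqrt_nonneg _
  have htnn : 0 ≤ t := Real.sqrt_nonneg _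
  have hle : lam0 * a + 1 ≤ (g : ℝ) := by
    rw [show (g:ℝ) = L * a + 1 by linarith]
    nlinarith
  have hst : s ≤ t := Real.sqrt_le_sqrt hle
  have hs2' : 2 ≤ s := by nlinarith [hs2, hsnn]
  have hkey : 2 * s * (s + 1) ^ 2 * (t ^ 2 - 1) ≤ 2 * t * (t + 1) ^ 2 * (s ^ 2 - 1) := by
    have h1 : 0 ≤ s * t - s - t - 1 := by
      nlinarith [sq_nonneg (s - 2), mul_nonneg (by linarith : (0:ℝ) ≤ t - s) (by linarith : (0:ℝ) ≤ s - 1)]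
    have h2 : 0 ≤ (t - s) * (s * t - s - t - 1) * (s + 1) * (t + 1) := by
      apply mul_nonneg; apply mul_nonneg; apply mul_nonneg
      all_goals linarith
    have hid : 2 * t * (t + 1) ^ 2 * (s ^ 2 - 1) - 2 * s * (s + 1) ^ 2 * (t ^ 2 - 1)
        = 2 * ((t - s) * (s * t - s - t - 1) * (s + 1) * (t + 1)) := by ring
    linarith
  have hla : (0:ℝ) < lam0 * a := by nlinarith
  have hLa : (0:ℝ) ≤ L * a := by positivity
  have hstep : (lam0 * a) * (L * b) ≤ (lam0 * a) * (2 * t * (t + 1) ^ 2) := by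
    calc (lam0 * a) * (L * b) = (L * a) * (lam0 * b) := by ring
      _ ≤ (L * a) * (2 * s * (s + 1) ^ 2) := mul_le_mul_of_nonneg_left hcrit hLa
      _ = 2 * s * (s + 1) ^ 2 * (t ^ 2 - 1) := by rw [ht2, hacast]; ring
      _ ≤ 2 * t * (t + 1) ^ 2 * (s ^ 2 - 1) := hkey
      _ = (lam0 * a) * (2 * t * (t + 1) ^ 2) := by rw [hs2]; ring
  rw [hbcast]
  exact le_of_mul_le_mul_left hstep hla
end

section
/- Let G₁ and G₂ be nontrivial finite groups and let φ : G₁ * G₂ → G₁ × G₂ be the canonical homomorphism from the free product to the direct product (restricting to the identity on each factor). Then the kernel of φ is generated by the commutators [g₁,g₂] = g₁g₂g₁⁻¹g₂⁻¹ with g₁ ∈ G₁ \ {1} and g₂ ∈ G₂ \ {1}, and this kernel is a free group of rank (|G₁|−1)(|G₂|−1). In particular there is an exact sequence 1 → [G₁,G₂] → G₁ * G₂ → G₁ × G₂ → 1 with [G₁,G₂] free of rank (|G₁|−1)(|G₂|−1). -/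
open scoped commutatorElement

/-!
The products `inr b * inl a` form a transversal of the kernel `K` of `toProd`: moving a letter
`inl a'` to the right past `inr b` costs `⁅inl a'⁻¹, inr b⁻¹⁆`, and conjugates of such commutators
by `G₁` are again products of commutators `⁅inl x, inr y⁆`. Hence these commutators generate `K`.

For freeness, map `G₁ ∗ G₂` to the regular wreath product `F ≀ᵣ (G₁ × G₂)`, `F` the free group
on the pairs `(a, b)` with `a ≠ 1`, `b ≠ 1`: on `G₁` by the canonical inclusion, on `G₂` by its
conjugate under a well-chosen element of the base group. On `K` the coordinate at `1` of this map
is a homomorphism to `F` sending `⁅inl a, inr b⁆` to the generator `(a, b)`, i.e. a left inverse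
of the map `F → K` (a Reidemeister–Schreier argument).
-/

theorem Nat.card_subtype_ne {α : Type*} [Finite α] (a : α) :
    Nat.card {x // x ≠ a} = Nat.card α - 1 := by
  classical
  have := Fintype.ofFinite α
  simp [Nat.card_eq_fintype_card, Fintype.card_subtype_compl]

namespace RegularWreathProduct

variable {D Q : Type*} [Group D] [Group Q]

def evalOnKerRightHom (q : Q) : (rightHom : D ≀ᵣ Q →* Q).ker →* D where
  toFun w := w.1.left q
  map_one' := rfl
  map_mul' w w' := by
    have h : w.1.right = 1 := w.2
    simp [h]

end RegularWreathProduct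

namespace Monoid.Coprod

open Subgroup

variable {G₁ G₂ : Type*} [Group G₁] [Group G₂]

variable (G₁ G₂) in
def nontrivialCommutators : Set (G₁ ∗ G₂) :=
  {x | ∃ g₁ : G₁, ∃ g₂ : G₂, g₁ ≠ 1 ∧ g₂ ≠ 1 ∧ x = ⁅(inl g₁ : G₁ ∗ G₂), inr g₂⁆}

theorem commutator_inl_inr_mem_closure (a : G₁) (b : G₂) :
    ⁅(inl a : G₁ ∗ G₂), inr b⁆ ∈ closure (nontrivialCommutators G₁ G₂) := by
  by_cases ha : a = 1
  · simp [ha]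
  by_cases hb : b = 1
  · simp [hb]
  exact subset_closure ⟨a, b, ha, hb, rfl⟩

theorem exists_eq_inr_mul_inl_mul_mem_closure (g : G₁ ∗ G₂) :
    ∃ a b, ∃ h ∈ closure (nontrivialCommutators G₁ G₂), g = inr b * inl a * h := by
  induction g using induction_on' with
  | one => exact ⟨1, 1, 1, one_mem _, by simp⟩
  | inl_mul a' g ih =>
    obtain ⟨a, b, h, hh, rfl⟩ := ih
    have hg : inl a' * (inr b * inl a * h) = inr b * inl (a' * a) *
        (⁅(inl (a⁻¹ * a'⁻¹) : G₁ ∗ G₂), inr b⁻¹⁆ * ⁅(inl a⁻¹ : G₁ ∗ G₂), inr b⁻¹⁆⁻¹ * h) := by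
      simp only [commutatorElement_def, map_mul, map_inv]
      group
    exact ⟨a' * a, b, _, mul_mem (mul_mem (commutator_inl_inr_mem_closure _ _)
      (inv_mem (commutator_inl_inr_mem_closure _ _))) hh, hg⟩
  | inr_mul b' g ih =>
    obtain ⟨a, b, h, hh, rfl⟩ := ih
    exact ⟨a, b' * b, h, hh, by simp only [map_mul, mul_assoc]⟩

theorem closure_nontrivialCommutators_le_ker_toProd :
    closure (nontrivialCommutators G₁ G₂) ≤ (toProd : G₁ ∗ G₂ →* G₁ × G₂).ker := by
  rw [closure_le]
  rintro _ ⟨a, b, -, -, rfl⟩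
  simp [commutatorElement_def]

theorem ker_toProd_eq_closure :
    (toProd : G₁ ∗ G₂ →* G₁ × G₂).ker = closure (nontrivialCommutators G₁ G₂) := by
  refine le_antisymm (fun g hg => ?_) closure_nontrivialCommutators_le_ker_toProd
  obtain ⟨a, b, h, hh, rfl⟩ := exists_eq_inr_mul_inl_mul_mem_closure g
  have hh' : toProd h = 1 := closure_nontrivialCommutators_le_ker_toProd hh
  have hab : (a, b) = (1 : G₁ × G₂) := by simpa [hh'] using hg
  obtain ⟨rfl, rfl⟩ := Prod.ext_iff.mp hab
  simpa using hh

variable (G₁ G₂) in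
abbrev NontrivialPairs : Type _ := {a : G₁ // a ≠ 1} × {b : G₂ // b ≠ 1}

open Classical in
noncomputable def freeGenOrOne (p : G₁ × G₂) : FreeGroup (NontrivialPairs G₁ G₂) :=
  if h : p.1 ≠ 1 ∧ p.2 ≠ 1 then .of (⟨p.1, h.1⟩, ⟨p.2, h.2⟩) else 1

@[simp]
theorem freeGenOrOne_one_left (b : G₂) : freeGenOrOne ((1 : G₁), b) = 1 := by
  simp [freeGenOrOne]

@[simp]
theorem freeGenOrOne_one_right (a : G₁) : freeGenOrOne (a, (1 : G₂)) = 1 := by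
  simp [freeGenOrOne]

theorem freeGenOrOne_of_ne_one {a : G₁} {b : G₂} (ha : a ≠ 1) (hb : b ≠ 1) :
    freeGenOrOne (a, b) = .of (⟨a, ha⟩, ⟨b, hb⟩) := by
  simp [freeGenOrOne, ha, hb]

/-- The conjugating base element is chosen so that `toWreath_commutator_left_one` holds: the
coordinate at `1` of `toWreath ⁅inl a, inr b⁆` is `v (a⁻¹, 1) * (v (a⁻¹, b⁻¹))⁻¹ * v (1, b⁻¹) *
(v 1)⁻¹` for the base function `v p = (freeGenOrOne p⁻¹)⁻¹`. -/
noncomputable def toWreath : G₁ ∗ G₂ →* FreeGroup (NontrivialPairs G₁ G₂) ≀ᵣ (G₁ × G₂) :=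
  lift (RegularWreathProduct.inl.comp (.inl G₁ G₂))
    ((MulAut.conj (⟨fun p => (freeGenOrOne p⁻¹)⁻¹, 1⟩ :
        FreeGroup (NontrivialPairs G₁ G₂) ≀ᵣ (G₁ × G₂))).toMonoidHom.comp
      (RegularWreathProduct.inl.comp (.inr G₁ G₂)))

theorem rightHom_comp_toWreath :
    RegularWreathProduct.rightHom.comp (toWreath (G₁ := G₁) (G₂ := G₂)) = toProd := by
  ext <;> simp [toWreath]

theorem toWreath_commutator_left_one (a : G₁) (b : G₂) :
    (toWreath ⁅(inl a : G₁ ∗ G₂), inr b⁆).left 1 = freeGenOrOne (a, b) := by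
  simp [toWreath, commutatorElement_def]

variable (G₁ G₂) in
def commutatorLift : FreeGroup (NontrivialPairs G₁ G₂) →* G₁ ∗ G₂ :=
  FreeGroup.lift fun s => ⁅(inl s.1.1 : G₁ ∗ G₂), inr s.2.1⁆

theorem range_commutatorLift :
    (commutatorLift G₁ G₂).range = closure (nontrivialCommutators G₁ G₂) := by
  rw [commutatorLift, FreeGroup.range_lift_eq_closure]
  congr 1
  ext x
  constructor
  · rintro ⟨⟨⟨a, ha⟩, ⟨b, hb⟩⟩, rfl⟩
    exact ⟨a, b, ha, hb, rfl⟩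
  · rintro ⟨a, b, ha, hb, rfl⟩
    exact ⟨(⟨a, ha⟩, ⟨b, hb⟩), rfl⟩

theorem toProd_comp_commutatorLift : toProd.comp (commutatorLift G₁ G₂) = 1 :=
  FreeGroup.ext_hom _ _ fun _ => by simp [commutatorLift, commutatorElement_def]

theorem commutatorLift_injective : Function.Injective (commutatorLift G₁ G₂) := by
  let ι := (toWreath.comp (commutatorLift G₁ G₂)).codRestrict RegularWreathProduct.rightHom.ker
    fun x => by
      rw [MonoidHom.mem_ker, ← MonoidHom.comp_apply, ← MonoidHom.comp_assoc,
        rightHom_comp_toWreath, toProd_comp_commutatorLift, MonoidHom.one_apply]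
  have hι : (RegularWreathProduct.evalOnKerRightHom (1 : G₁ × G₂)).comp ι = MonoidHom.id _ := by
    refine FreeGroup.ext_hom _ _ fun ⟨⟨a, ha⟩, ⟨b, hb⟩⟩ => ?_
    change (toWreath ⁅(inl a : G₁ ∗ G₂), inr b⁆).left (1 : G₁ × G₂) = _
    rw [toWreath_commutator_left_one, freeGenOrOne_of_ne_one ha hb]
    rfl
  have hι_inj : Function.Injective ι :=
    Function.LeftInverse.injective (g := RegularWreathProduct.evalOnKerRightHom 1)
      fun x => DFunLike.congr_fun hι x
  exact fun x y h => hι_inj (Subtype.ext (congrArg toWreath h))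

noncomputable def kerToProdEquivFreeGroup :
    (toProd : G₁ ∗ G₂ →* G₁ × G₂).ker ≃* FreeGroup (NontrivialPairs G₁ G₂) :=
  (MulEquiv.subgroupCongr (ker_toProd_eq_closure.trans range_commutatorLift.symm)).trans
    (MonoidHom.ofInjective commutatorLift_injective).symm

theorem card_nontrivialPairs [Finite G₁] [Finite G₂] :
    Nat.card (NontrivialPairs G₁ G₂) = (Nat.card G₁ - 1) * (Nat.card G₂ - 1) := by
  rw [Nat.card_prod, Nat.card_subtype_ne, Nat.card_subtype_ne]

end Monoid.Coprod

theorem kernel_coprod_to_prod_free_general (G₁ G₂ : Type*) [Group G₁] [Group G₂]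
    [Finite G₁] [Finite G₂] :
    Function.Surjective (Monoid.Coprod.toProd : Monoid.Coprod G₁ G₂ →* G₁ × G₂) ∧
    (Monoid.Coprod.toProd : Monoid.Coprod G₁ G₂ →* G₁ × G₂).ker =
      Subgroup.closure
        {x : Monoid.Coprod G₁ G₂ | ∃ g₁ : G₁, ∃ g₂ : G₂, g₁ ≠ 1 ∧ g₂ ≠ 1 ∧
          x = ⁅(Monoid.Coprod.inl g₁ : Monoid.Coprod G₁ G₂), Monoid.Coprod.inr g₂⁆} ∧
    Nonempty ((Monoid.Coprod.toProd : Monoid.Coprod G₁ G₂ →* G₁ × G₂).ker ≃*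
      FreeGroup (Fin ((Nat.card G₁ - 1) * (Nat.card G₂ - 1)))) :=
  ⟨Monoid.Coprod.toProd_surjective, Monoid.Coprod.ker_toProd_eq_closure,
    ⟨Monoid.Coprod.kerToProdEquivFreeGroup.trans <| FreeGroup.freeGroupCongr <|
      (Finite.equivFin _).trans (finCongr Monoid.Coprod.card_nontrivialPairs)⟩⟩

/-- (Serre, Trees, I.1 Prop. 4 = Lemma 6.6 of the paper.)
For nontrivial finite groups `G₁, G₂`, the kernel of the canonical homomorphism
`G₁ * G₂ → G₁ × G₂` from the free product to the direct product is generated by the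
commutators `[g₁, g₂]` with `g₁ ≠ 1`, `g₂ ≠ 1`, it is free of rank `(|G₁|−1)(|G₂|−1)`,
and the canonical homomorphism is surjective (so we get an exact sequence
`1 → [G₁,G₂] → G₁ * G₂ → G₁ × G₂ → 1`). -/
theorem kernel_coprod_to_prod_free (G₁ G₂ : Type*) [Group G₁] [Group G₂]
    [Finite G₁] [Finite G₂] [Nontrivial G₁] [Nontrivial G₂] :
    Function.Surjective (Monoid.Coprod.toProd : Monoid.Coprod G₁ G₂ →* G₁ × G₂) ∧
    (Monoid.Coprod.toProd : Monoid.Coprod G₁ G₂ →* G₁ × G₂).ker =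
      Subgroup.closure
        {x : Monoid.Coprod G₁ G₂ | ∃ g₁ : G₁, ∃ g₂ : G₂, g₁ ≠ 1 ∧ g₂ ≠ 1 ∧
          x = ⁅(Monoid.Coprod.inl g₁ : Monoid.Coprod G₁ G₂), Monoid.Coprod.inr g₂⁆} ∧
    Nonempty ((Monoid.Coprod.toProd : Monoid.Coprod G₁ G₂ →* G₁ × G₂).ker ≃*
      FreeGroup (Fin ((Nat.card G₁ - 1) * (Nat.card G₂ - 1)))) :=
  kernel_coprod_to_prod_free_general G₁ G₂
end

section
/- Let k be a field of characteristic p > 0, let c, α ∈ k with c ≠ 0 and α ≠ 0, and let B = c(x−α)/x ∈ k(x) be the indicated rational function in the rational function field k(x). Let ζ ∈ k be nonzero, and suppose there exists B₀ ∈ k(x) such that B(ζx) − ζ·B(x) = B₀(x)^p − B₀(x), where B(ζx) denotes the image of B under the k-algebra endomorphism of k(x) sending x to ζx. Then ζ² = 1. -/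
open RatFunc

/-- Key identity in the proof of Lemma 6.7. Let `k` have characteristic `p > 0`,
`c, α, ζ ∈ k` nonzero, and `B = c(x−α)/x ∈ k(x)`. If there is `B₀ ∈ k(x)` with
`B(ζx) − ζ·B(x) = B₀^p − B₀` (where `B(ζx) = c(ζx−α)/(ζx)` is the image of `B` under the
`k`-algebra endomorphism of `k(x)` sending `x` to `ζx`), then `ζ² = 1`. -/
theorem artin_schreier_symmetry {p : ℕ} [Fact p.Prime] {k : Type*} [Field k] [CharP k p]
    (c α ζ : k) (hc : c ≠ 0) (hα : α ≠ 0) (hζ : ζ ≠ 0) (B₀ : RatFunc k)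
    (h : RatFunc.C c * (RatFunc.C ζ * RatFunc.X - RatFunc.C α) / (RatFunc.C ζ * RatFunc.X) -
        RatFunc.C ζ * (RatFunc.C c * (RatFunc.X - RatFunc.C α) / RatFunc.X) =
        B₀ ^ p - B₀) :
    ζ ^ 2 = 1 := by
  have hp : p.Prime := Fact.out
  have hp2 : 2 ≤ p := hp.two_le
  set n := B₀.num with hn
  set d := B₀.denom with hd
  have hdne : d ≠ 0 := RatFunc.denom_ne_zero B₀
  have hXne : (RatFunc.X : RatFunc k) ≠ 0 := RatFunc.X_ne_zero
  have hζC : (RatFunc.C ζ : RatFunc k) ≠ 0 :=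
    (map_ne_zero_iff _ (RingHom.injective RatFunc.C)).mpr hζ
  -- key identity in RatFunc
  have key : RatFunc.C ζ * RatFunc.X * (B₀ ^ p - B₀) =
      RatFunc.C (ζ * c - ζ ^ 2 * c) * RatFunc.X + RatFunc.C (c * α * ζ ^ 2 - c * α) := by
    rw [← h]
    simp only [map_sub, map_mul, map_pow]
    field_simp
    ring
  -- clear denominators to get a polynomial identity
  have hB : B₀ * algebraMap (Polynomial k) (RatFunc k) d =
      algebraMap (Polynomial k) (RatFunc k) n := by
    rw [← RatFunc.num_div_denom B₀, div_mul_cancel₀ _ (RatFunc.algebraMap_ne_zero hdne)]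
  have poly : (Polynomial.C ζ * Polynomial.X) * (n ^ p - n * d ^ (p - 1)) =
      (Polynomial.C (ζ * c - ζ ^ 2 * c) * Polynomial.X +
        Polynomial.C (c * α * ζ ^ 2 - c * α)) * d ^ p := by
    apply RatFunc.algebraMap_injective k
    simp only [map_mul, map_sub, map_add, map_pow, RatFunc.algebraMap_C, RatFunc.algebraMap_X]
    rw [← hB]
    have hdp' : algebraMap (Polynomial k) (RatFunc k) d *
        (algebraMap (Polynomial k) (RatFunc k) d) ^ (p - 1) =
        (algebraMap (Polynomial k) (RatFunc k) d) ^ p := by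
      rw [← pow_succ', Nat.sub_add_cancel hp.one_le]
    calc RatFunc.C ζ * RatFunc.X *
          ((B₀ * algebraMap (Polynomial k) (RatFunc k) d) ^ p -
            B₀ * algebraMap (Polynomial k) (RatFunc k) d *
              (algebraMap (Polynomial k) (RatFunc k) d) ^ (p - 1))
        = RatFunc.C ζ * RatFunc.X * (B₀ ^ p - B₀) *
            (algebraMap (Polynomial k) (RatFunc k) d) ^ p := by
          rw [mul_pow, mul_assoc B₀, hdp']; ring
      _ = _ := by rw [key]; simp only [map_sub, map_mul, map_pow]
  -- the denominator must be constant
  have hcop : IsCoprime (n ^ p - n * d ^ (p - 1)) d := by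
    have h1 : IsCoprime (n ^ p) d := (RatFunc.isCoprime_num_denom B₀).pow_left
    have h2 := h1.add_mul_right_left (-(n * d ^ (p - 2)))
    have e : n ^ p + -(n * d ^ (p - 2)) * d = n ^ p - n * d ^ (p - 1) := by
      have hdd : d ^ (p - 2) * d = d ^ (p - 1) := by
        rw [← pow_succ]
        congr 1
        omega
      rw [neg_mul, ← sub_eq_add_neg, mul_assoc, hdd]
    rwa [e] at h2
  have hdvd : d ^ p ∣ Polynomial.C ζ * Polynomial.X := by
    refine (hcop.symm.pow_left).dvd_of_dvd_mul_right ?_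
    exact ⟨Polynomial.C (ζ * c - ζ ^ 2 * c) * Polynomial.X +
      Polynomial.C (c * α * ζ ^ 2 - c * α), by rw [poly]; ring⟩
  have hdeg : (d ^ p).natDegree ≤ 1 := by
    have hne : Polynomial.C ζ * Polynomial.X ≠ 0 := by
      simp [hζ]
    have := Polynomial.natDegree_le_of_dvd hdvd hne
    simpa [Polynomial.natDegree_C_mul_X _ hζ] using this
  have hd0 : d.natDegree = 0 := by
    rw [Polynomial.natDegree_pow] at hdeg
    by_contra hne
    have : 1 ≤ d.natDegree := Nat.pos_of_ne_zero hne
    nlinarith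
  have hd1 : d = 1 := (RatFunc.monic_denom B₀).natDegree_eq_zero.mp hd0
  rw [hd1] at poly
  simp only [one_pow, mul_one] at poly
  have heval := congrArg (Polynomial.eval 0) poly
  simp only [Polynomial.eval_mul, Polynomial.eval_add, Polynomial.eval_sub, Polynomial.eval_pow,
    Polynomial.eval_C, Polynomial.eval_X, mul_zero, zero_mul, add_zero, zero_add] at heval
  have hD : c * α * ζ ^ 2 - c * α = 0 := heval.symm
  have hfin : c * α * ζ ^ 2 = c * α * 1 := by linear_combination hD
  exact mul_left_cancel₀ (mul_ne_zero hc hα) hfin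
end

section
/- Let E₁ and E₂ be finite groups, let C be a finite group acting on E₁ and on E₂, and let N = (E₁ * E₂) ⋊ C be the semidirect product of the free product E₁ * E₂ by C, where C acts on E₁ * E₂ factorwise. Regard E₁, E₂ and C as subgroups of N. Let Γ be a torsion-free normal subgroup of N such that E₁Γ = E₂Γ (the images of E₁ and E₂ in N/Γ coincide). Then the quotient N/Γ is isomorphic to the semidirect product E₁ ⋊ C. -/
open Monoid

/-- The factorwise action of a group `C` on the free product `E₁ * E₂`, induced by
actions `φ₁`, `φ₂` of `C` on `E₁` and on `E₂`. -/
def coprodAut {C E₁ E₂ : Type*} [Group C] [Group E₁] [Group E₂]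
    (φ₁ : C →* MulAut E₁) (φ₂ : C →* MulAut E₂) :
    C →* MulAut (Coprod E₁ E₂) where
  toFun c := MulEquiv.coprodCongr (φ₁ c) (φ₂ c)
  map_one' := by
    ext x
    show Coprod.map ((φ₁ 1 : MulAut E₁) : E₁ →* E₁) ((φ₂ 1 : MulAut E₂) : E₂ →* E₂) x = x
    rw [map_one, map_one]
    rw [show ((1 : MulAut E₁) : E₁ →* E₁) = MonoidHom.id E₁ from rfl,
      show ((1 : MulAut E₂) : E₂ →* E₂) = MonoidHom.id E₂ from rfl, Coprod.map_id_id]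
    rfl
  map_mul' c d := by
    ext x
    show Coprod.map ((φ₁ (c * d) : MulAut E₁) : E₁ →* E₁)
        ((φ₂ (c * d) : MulAut E₂) : E₂ →* E₂) x =
      Coprod.map ((φ₁ c : MulAut E₁) : E₁ →* E₁) ((φ₂ c : MulAut E₂) : E₂ →* E₂)
        (Coprod.map ((φ₁ d : MulAut E₁) : E₁ →* E₁) ((φ₂ d : MulAut E₂) : E₂ →* E₂) x)
    rw [map_mul, map_mul, Coprod.map_map]
    rfl

/-- group-theoretic step in the proof of Proposition 6.8, case (B):
let `E₁`, `E₂`, `C` be finite groups, let `C` act on `E₁` and `E₂`, and let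
`N = (E₁ * E₂) ⋊ C` with the factorwise action of `C` on the free product.  If `Γ` is a
torsion-free normal subgroup of `N` such that the images of `E₁` and of `E₂` in `N ⧸ Γ`
coincide, then `N ⧸ Γ ≅ E₁ ⋊ C`. -/
theorem quotient_of_coprod_semidirect {E₁ E₂ C : Type*} [Group E₁] [Group E₂] [Group C]
    [Finite E₁] [Finite E₂] [Finite C]
    (φ₁ : C →* MulAut E₁) (φ₂ : C →* MulAut E₂)
    (Γ : Subgroup ((Coprod E₁ E₂) ⋊[coprodAut φ₁ φ₂] C)) [Γ.Normal]
    (htf : ∀ x ∈ Γ, x ≠ 1 → ¬ IsOfFinOrder x)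
    (hEq : Subgroup.map (QuotientGroup.mk' Γ)
        ((SemidirectProduct.inl.comp (Coprod.inl : E₁ →* Coprod E₁ E₂)).range) =
      Subgroup.map (QuotientGroup.mk' Γ)
        ((SemidirectProduct.inl.comp (Coprod.inr : E₂ →* Coprod E₁ E₂)).range)) :
    Nonempty ((((Coprod E₁ E₂) ⋊[coprodAut φ₁ φ₂] C) ⧸ Γ) ≃* (E₁ ⋊[φ₁] C)) := by
  set N := (Coprod E₁ E₂) ⋊[coprodAut φ₁ φ₂] C
  -- the natural embedding ι : E₁ ⋊ C →* N
  have hcompat : ∀ c : C,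
      (SemidirectProduct.inl.comp (Coprod.inl : E₁ →* Coprod E₁ E₂)).comp
          ((φ₁ c).toMonoidHom) =
        ((MulAut.conj ((SemidirectProduct.inr : C →* N) c)).toMonoidHom).comp
          (SemidirectProduct.inl.comp (Coprod.inl : E₁ →* Coprod E₁ E₂)) := by
    intro c
    refine MonoidHom.ext fun e => ?_
    show (SemidirectProduct.inl (Coprod.inl (φ₁ c e)) : N) =
      SemidirectProduct.inr c * SemidirectProduct.inl (Coprod.inl e) *
        (SemidirectProduct.inr c)⁻¹
    rw [← map_inv, ← SemidirectProduct.inl_aut]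
    rfl
  set ι : (E₁ ⋊[φ₁] C) →* N :=
    SemidirectProduct.lift (SemidirectProduct.inl.comp (Coprod.inl : E₁ →* Coprod E₁ E₂))
      (SemidirectProduct.inr : C →* N) hcompat with hι
  have hιapply : ∀ x : E₁ ⋊[φ₁] C,
      ι x = ⟨Coprod.inl x.left, x.right⟩ := by
    intro x
    show (SemidirectProduct.inl (Coprod.inl x.left) : N) * SemidirectProduct.inr x.right = _
    exact SemidirectProduct.inl_left_mul_inr_right ⟨Coprod.inl x.left, x.right⟩
  have hιinj : Function.Injective ι := by
    intro x y hxy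
    rw [hιapply, hιapply] at hxy
    injection hxy with h1 h2
    ext
    · exact Coprod.inl_injective h1
    · exact h2
  have : Finite (E₁ ⋊[φ₁] C) := by
    have : Finite (E₁ × C) := inferInstance
    exact Finite.of_injective (fun x => (x.left, x.right))
      (by rintro ⟨a, b⟩ ⟨c, d⟩ h; simp only [Prod.mk.injEq] at h; ext <;> simp [h.1, h.2])
  set h : (E₁ ⋊[φ₁] C) →* (N ⧸ Γ) := (QuotientGroup.mk' Γ).comp ι with hh
  have hinj : Function.Injective h := by
    rw [← MonoidHom.ker_eq_bot_iff, Subgroup.eq_bot_iff_forall]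
    intro x hx
    have hmem : ι x ∈ Γ := (QuotientGroup.eq_one_iff (ι x)).mp hx
    by_contra hx1
    have hne : ι x ≠ 1 := fun hc => hx1 (hιinj (by rw [hc, map_one]))
    exact htf (ι x) hmem hne (ι.isOfFinOrder (isOfFinOrder_of_finite x))
  have hsurj : Function.Surjective h := by
    intro y
    obtain ⟨n, rfl⟩ := QuotientGroup.mk'_surjective Γ y
    -- reduce to generators
    have key : ∀ w : Coprod E₁ E₂,
        QuotientGroup.mk' Γ (SemidirectProduct.inl w : N) ∈ h.range := by
      intro w
      induction w using Coprod.induction_on with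
      | inl e =>
        exact ⟨⟨e, 1⟩, by rw [hh, MonoidHom.comp_apply, hιapply]; rfl⟩
      | inr e =>
        have hmem : QuotientGroup.mk' Γ (SemidirectProduct.inl (Coprod.inr e) : N) ∈
            Subgroup.map (QuotientGroup.mk' Γ)
              ((SemidirectProduct.inl.comp (Coprod.inr : E₂ →* Coprod E₁ E₂)).range) :=
          ⟨SemidirectProduct.inl (Coprod.inr e), ⟨e, rfl⟩, rfl⟩
        rw [← hEq] at hmem
        obtain ⟨z, ⟨e', rfl⟩, hz⟩ := hmem
        refine ⟨⟨e', 1⟩, ?_⟩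
        rw [hh, MonoidHom.comp_apply, hιapply]
        exact hz
      | mul x y hx hy =>
        obtain ⟨a, ha⟩ := hx
        obtain ⟨b, hb⟩ := hy
        exact ⟨a * b, by rw [map_mul, ha, hb, ← map_mul, ← map_mul]⟩
    have hn : (n : N) = SemidirectProduct.inl n.left * SemidirectProduct.inr n.right :=
      (SemidirectProduct.inl_left_mul_inr_right n).symm
    rw [hn, map_mul]
    obtain ⟨a, ha⟩ := key n.left
    refine ⟨a * ⟨1, n.right⟩, ?_⟩
    rw [map_mul, ha]
    congr 1
    rw [hh, MonoidHom.comp_apply, hιapply]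
    congr 1
    show ({ left := Coprod.inl 1, right := n.right } : N) = SemidirectProduct.inr n.right
    rw [map_one]
    rfl
  exact ⟨(MulEquiv.ofBijective h ⟨hinj, hsurj⟩).symm⟩
end

section
/- Let p be a prime, q = p^t, let K be an algebraically closed field of characteristic p containing F_q, and let c ∈ K be nonzero. Let C = {(x,y) ∈ K × K : (x^q − x)(y^q − y) = c}. Then each of the maps (x,y) ↦ (αx + β, α⁻¹y + δ) for α ∈ F_q^*, β, δ ∈ F_q, and the map (x,y) ↦ (y,x), restricts to a permutation of the set C, and the subgroup of the symmetric group of C generated by these permutations is isomorphic to (F_q × F_q) ⋊ D_{q−1}, where D_{q−1} = F_q^* ⋊ Z/2 acts by α·(β,δ) = (αβ, α⁻¹δ) for α ∈ F_q^* and the generator of Z/2 acts by swapping the two coordinates; in particular this group of permutations has order 2q²(q−1). -/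
noncomputable section

/-- The homomorphism from `Z/2` (written multiplicatively) to a group `G`, sending the
generator to a given element `a` with `a * a = 1`. -/
def zmod2Hom {G : Type*} [Group G] (a : G) (ha : a * a = 1) :
    Multiplicative (ZMod 2) →* G where
  toFun z := a ^ (Multiplicative.toAdd z).val
  map_one' := by simp
  map_mul' x y := by
    have h2 : a ^ 2 = 1 := by rw [pow_two]; exact ha
    show a ^ ((Multiplicative.toAdd (x * y)).val) = _
    rw [toAdd_mul, ZMod.val_add, ← pow_eq_pow_mod _ h2, pow_add]

/-- The generator of `Z/2`, written multiplicatively. -/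
def zmod2Gen : Multiplicative (ZMod 2) := Multiplicative.ofAdd 1

/-- Inversion as an automorphism of an abelian group. -/
def invAut (C : Type*) [CommGroup C] : MulAut C where
  toFun c := c⁻¹
  invFun c := c⁻¹
  left_inv := inv_inv
  right_inv := inv_inv
  map_mul' := mul_inv

theorem invAut_sq (C : Type*) [CommGroup C] : invAut C * invAut C = 1 := by
  ext c; exact inv_inv c

/-- The action of `Z/2` on an abelian group `C` by inversion. -/
def inversionAction (C : Type*) [CommGroup C] : Multiplicative (ZMod 2) →* MulAut C :=
  zmod2Hom (invAut C) (invAut_sq C)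

/-- The generalized dihedral group `C ⋊ Z/2` of an abelian group `C`, the generator of
`Z/2` acting by inversion.  For `C = Z_n` this is the dihedral group `D_n` of order `2n`. -/
abbrev GenDihedral (C : Type*) [CommGroup C] : Type _ :=
  C ⋊[inversionAction C] Multiplicative (ZMod 2)

/-- `AddAut A →* MulAut (Multiplicative A)`. -/
def addAutToMulAut (A : Type*) [AddGroup A] :
    Multiplicative (AddAut A) →* MulAut (Multiplicative A) where
  toFun e := AddEquiv.toMultiplicative (Multiplicative.toAdd e)
  map_one' := rfl
  map_mul' _ _ := rfl

variable (F : Type*) [Field F]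

/-- The action of `α ∈ F^*` on `F × F` by `(β,δ) ↦ (αβ, α⁻¹δ)`. -/
def diagAct : Fˣ →* Multiplicative (AddAut (F × F)) where
  toFun α := Multiplicative.ofAdd (AddEquiv.prodCongr (Multiplicative.toAdd (AddAut.mulLeft α))
    (Multiplicative.toAdd (AddAut.mulLeft α⁻¹)))
  map_one' := by
    refine Multiplicative.toAdd.injective ?_
    ext x
    · show ((1 : Fˣ) : F) * x.1 = x.1
      simp
    · show ((1⁻¹ : Fˣ) : F) * x.2 = x.2
      simp
  map_mul' α β := by
    refine Multiplicative.toAdd.injective ?_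
    ext x
    · show ((α * β : Fˣ) : F) * x.1 = (α : F) * ((β : F) * x.1)
      rw [Units.val_mul, mul_assoc]
    · show (((α * β)⁻¹ : Fˣ) : F) * x.2 = ((α⁻¹ : Fˣ) : F) * (((β⁻¹ : Fˣ) : F) * x.2)
      rw [mul_inv_rev, Units.val_mul]
      ring

/-- Coordinate swap as an additive automorphism of `F × F`. -/
def swapAut : Multiplicative (AddAut (F × F)) :=
  Multiplicative.ofAdd (AddEquiv.prodComm : (F × F) ≃+ (F × F))

theorem swapAut_sq : swapAut F * swapAut F = 1 := by
  refine Multiplicative.toAdd.injective ?_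
  ext x
  · rfl
  · rfl

/-- The action of `F^*` on `F × F` (written multiplicatively) by `α·(β,δ) = (αβ, α⁻¹δ)`. -/
def diagActM : Fˣ →* MulAut (Multiplicative (F × F)) :=
  (addAutToMulAut (F × F)).comp (diagAct F)

/-- The coordinate swap on `F × F`, written multiplicatively. -/
def swapAutM : MulAut (Multiplicative (F × F)) := (addAutToMulAut (F × F)) (swapAut F)

theorem swapAutM_sq : swapAutM F * swapAutM F = 1 := by
  rw [swapAutM, ← map_mul, swapAut_sq, map_one]

theorem diagAct_conj_swap (u : Fˣ) :
    diagAct F u⁻¹ = swapAut F * diagAct F u * (swapAut F)⁻¹ := by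
  refine Multiplicative.toAdd.injective ?_
  ext x
  · rfl
  · show ((u⁻¹⁻¹ : Fˣ) : F) * x.2 = (u : F) * x.2
    rw [inv_inv]

theorem diagActM_compat :
    ∀ g : Multiplicative (ZMod 2),
      (diagActM F).comp ((inversionAction Fˣ g).toMonoidHom) =
        (MulAut.conj (zmod2Hom (swapAutM F) (swapAutM_sq F) g)).toMonoidHom.comp
          (diagActM F) := by
  intro g
  have hmlt : (Multiplicative.toAdd g).val < 2 := ZMod.val_lt _
  have h1 : inversionAction Fˣ g = (invAut Fˣ) ^ (Multiplicative.toAdd g).val := rfl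
  have h2 : zmod2Hom (swapAutM F) (swapAutM_sq F) g =
      (swapAutM F) ^ (Multiplicative.toAdd g).val := rfl
  rw [h1, h2]
  set m := (Multiplicative.toAdd g).val with hm
  clear_value m
  interval_cases m
  · rw [pow_zero, pow_zero]
    ext u x <;> rfl
  · rw [pow_one, pow_one]
    refine MonoidHom.ext fun u => ?_
    show (addAutToMulAut (F × F)) (diagAct F u⁻¹) =
      MulAut.conj ((addAutToMulAut (F × F)) (swapAut F))
        ((addAutToMulAut (F × F)) (diagAct F u))
    rw [diagAct_conj_swap, map_mul, map_mul, map_inv, MulAut.conj_apply]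

/-- The action of the generalized dihedral group `D_{q-1} = F^* ⋊ Z/2` on `F × F` (written
multiplicatively), where `α ∈ F^*` acts by `α·(β,δ) = (αβ, α⁻¹δ)` and the generator of
`Z/2` acts by swapping the two coordinates. -/
def dihedralOnPairs : GenDihedral Fˣ →* MulAut (Multiplicative (F × F)) :=
  SemidirectProduct.lift (diagActM F) (zmod2Hom (swapAutM F) (swapAutM_sq F))
    (diagActM_compat F)

/-- The group `(F × F) ⋊ D_{q-1}`, where `D_{q-1} = F^* ⋊ Z/2` acts by
`α·(β,δ) = (αβ, α⁻¹δ)` for `α ∈ F^*` and the generator of `Z/2` swaps the coordinates. -/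
abbrev PairsSemidirectDihedral : Type _ :=
  (Multiplicative (F × F)) ⋊[dihedralOnPairs F] GenDihedral Fˣ

end

/-!
Through `emb`, the group `(F_q × F_q) ⋊ D_{q-1}` acts on `K × K` by the affine maps
`(x, y) ↦ (α s₁ + β, α⁻¹ s₂ + δ)`, where `s = (x, y)` or `s = (y, x)` according to the
`Z/2` component. Since `x ↦ x ^ q - x` is additive in characteristic `p` and `α ^ q = α` on `F_q`,
`(α x + β) ^ q - (α x + β) = α (x ^ q - x)`, so these maps preserve `C`. The action on `C` is
faithful: `K` being algebraically closed, `C` contains points `(x, y)` and `(x + 1, y)`, and only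
the identity fixes both. As the group is generated by the affine elements and the swap, the
subgroup of `Perm C` they generate is the image of an injective homomorphism.
-/

open Equiv SemidirectProduct

section ZMod2

variable {G : Type*} [Group G]

theorem eq_one_or_eq_zmod2Gen (ε : Multiplicative (ZMod 2)) : ε = 1 ∨ ε = zmod2Gen := by
  revert ε; decide

@[simp]
theorem zmod2Hom_zmod2Gen (a : G) (ha : a * a = 1) : zmod2Hom a ha zmod2Gen = a :=
  pow_one a

theorem zmod2Hom_conj_compat {N : Type*} [Group N] (f : N →* G) {a : MulAut N} (ha : a * a = 1)
    {b : G} (hb : b * b = 1) (hab : ∀ n, f (a n) = b * f n * b⁻¹)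
    (ε : Multiplicative (ZMod 2)) :
    f.comp (zmod2Hom a ha ε).toMonoidHom =
      (MulAut.conj (zmod2Hom b hb ε)).toMonoidHom.comp f := by
  rcases eq_one_or_eq_zmod2Gen ε with rfl | rfl
  · ext n; simp
  · ext n; simp [hab]

end ZMod2

theorem SemidirectProduct.lift_compat_of_inl_of_inr {N₀ G₀ N H : Type*} [Group N₀]
    [Group G₀] [Group N] [Group H] {ψ : G₀ →* MulAut N₀} {φ : N₀ ⋊[ψ] G₀ →* MulAut N}
    (f₁ : N →* H) (f₂ : N₀ ⋊[ψ] G₀ →* H)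
    (hl : ∀ n₀, f₁.comp (φ (inl n₀)).toMonoidHom =
      (MulAut.conj (f₂ (inl n₀))).toMonoidHom.comp f₁)
    (hr : ∀ g₀, f₁.comp (φ (inr g₀)).toMonoidHom =
      (MulAut.conj (f₂ (inr g₀))).toMonoidHom.comp f₁)
    (g : N₀ ⋊[ψ] G₀) :
    f₁.comp (φ g).toMonoidHom = (MulAut.conj (f₂ g)).toMonoidHom.comp f₁ := by
  ext n
  have e₁ := DFunLike.congr_fun (hl g.left) (φ (inr g.right) n)
  have e₂ := DFunLike.congr_fun (hr g.right) n
  simp only [MonoidHom.comp_apply, MulEquiv.coe_toMonoidHom, MulAut.conj_apply] at e₁ e₂ ⊢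
  rw [← inl_left_mul_inr_right g, map_mul φ, MulAut.mul_apply, e₁, e₂, map_mul f₂]
  group

def Equiv.Perm.restrictHom {G α : Type*} [Group G] (f : G →* Perm α) (s : Set α)
    (hs : ∀ g, ∀ x ∈ s, f g x ∈ s) : G →* Perm s where
  toFun g := (f g).subtypePerm fun x => ⟨fun h => by simpa using hs g⁻¹ _ h, hs g x⟩
  map_one' := by ext; simp
  map_mul' g h := by
    ext x; simp only [Perm.coe_mul, Function.comp_apply, Perm.subtypePerm_apply, map_mul]

theorem Equiv.prodComm_mul_self (α : Type*) :
    (prodComm α α : Perm (α × α)) * prodComm α α = 1 :=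
  rfl

section PairsSemidirectDihedral

variable (F : Type*) [Field F]

@[simp]
theorem dihedralOnPairs_inl_apply (a : Fˣ) (n : Multiplicative (F × F)) :
    Multiplicative.toAdd (dihedralOnPairs F (inl a) n) =
      (a * (Multiplicative.toAdd n).1, ↑a⁻¹ * (Multiplicative.toAdd n).2) := rfl

theorem dihedralOnPairs_inr (ε : Multiplicative (ZMod 2)) :
    dihedralOnPairs F (inr ε) = zmod2Hom (swapAutM F) (swapAutM_sq F) ε := lift_inr _ _ _ _

def PairsSemidirectDihedral.swap : PairsSemidirectDihedral F := ⟨1, ⟨1, zmod2Gen⟩⟩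

theorem PairsSemidirectDihedral.card :
    Nat.card (PairsSemidirectDihedral F) = 2 * Nat.card F ^ 2 * (Nat.card F - 1) := by
  simp [SemidirectProduct.card, Nat.card_units, Nat.card_congr Multiplicative.toAdd]
  ring

variable {F}

def PairsSemidirectDihedral.affine (abd : Fˣ × F × F) : PairsSemidirectDihedral F :=
  ⟨Multiplicative.ofAdd (abd.2.1, abd.2.2), ⟨abd.1, 1⟩⟩

theorem PairsSemidirectDihedral.closure_range_affine_union_swap :
    Subgroup.closure (Set.range affine ∪ {swap F}) = ⊤ := by
  refine eq_top_iff.2 fun ⟨m, a, ε⟩ _ => ?_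
  have haffine : (⟨m, ⟨a, 1⟩⟩ : PairsSemidirectDihedral F) ∈
      Subgroup.closure (Set.range affine ∪ {swap F}) :=
    Subgroup.subset_closure
      (Or.inl ⟨(a, (Multiplicative.toAdd m).1, (Multiplicative.toAdd m).2), rfl⟩)
  rcases eq_one_or_eq_zmod2Gen ε with rfl | rfl
  · exact haffine
  · have hmul :
        (⟨m, ⟨a, zmod2Gen⟩⟩ : PairsSemidirectDihedral F) = ⟨m, ⟨a, 1⟩⟩ * swap F := by
      ext <;> simp [swap]
    rw [hmul]
    exact mul_mem haffine (Subgroup.subset_closure (Or.inr rfl))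

end PairsSemidirectDihedral

section AffineMaps

variable {F K : Type*} [Field F] [Field K] (emb : F →+* K)

def translationHom : Multiplicative (F × F) →* Perm (K × K) :=
  AddMonoidHom.toMultiplicativeLeft
    ((AddAction.toPermHom (K × K) (K × K)).comp (emb.toAddMonoidHom.prodMap emb.toAddMonoidHom))

@[simp]
theorem translationHom_apply (n : Multiplicative (F × F)) (w : K × K) :
    translationHom emb n w =
      (emb (Multiplicative.toAdd n).1 + w.1, emb (Multiplicative.toAdd n).2 + w.2) := rfl

def scalingHom : Fˣ →* Perm (K × K) where
  toFun a :=
    prodCongr (Equiv.mulLeft₀ (emb a) (by simp)) (Equiv.mulLeft₀ (emb ↑a⁻¹) (by simp))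
  map_one' := by ext <;> simp
  map_mul' a b := by ext <;> simp <;> ring

@[simp]
theorem scalingHom_apply (a : Fˣ) (w : K × K) :
    scalingHom emb a w = (emb a * w.1, emb ↑a⁻¹ * w.2) := rfl

@[simp]
theorem scalingHom_symm_apply (a : Fˣ) (w : K × K) :
    (scalingHom emb a).symm w = (emb ↑a⁻¹ * w.1, emb a * w.2) := by
  rw [← Perm.inv_def, ← map_inv, scalingHom_apply, inv_inv]

def dihedralHom : GenDihedral Fˣ →* Perm (K × K) :=
  lift (scalingHom emb) (zmod2Hom (prodComm K K) (prodComm_mul_self K))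
    (zmod2Hom_conj_compat _ _ _ fun a => by ext w <;> simp [invAut])

@[simp]
theorem dihedralHom_inl (a : Fˣ) : dihedralHom emb (inl a) = scalingHom emb a := lift_inl _ _ _ _

@[simp]
theorem dihedralHom_inr (ε : Multiplicative (ZMod 2)) :
    dihedralHom emb (inr ε) = zmod2Hom (prodComm K K) (prodComm_mul_self K) ε :=
  lift_inr _ _ _ _

def affineHom : PairsSemidirectDihedral F →* Perm (K × K) :=
  lift (translationHom emb) (dihedralHom emb) <| lift_compat_of_inl_of_inr _ _
    (fun a => by ext n w <;> simp [mul_add])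
    (fun ε => by
      simpa only [dihedralHom_inr, dihedralOnPairs_inr] using
        zmod2Hom_conj_compat (translationHom emb) (swapAutM_sq F) (prodComm_mul_self K)
          (fun n => Equiv.ext fun w => rfl) ε)

@[simp]
theorem affineHom_inl (n : Multiplicative (F × F)) :
    affineHom emb (inl n) = translationHom emb n :=
  lift_inl _ _ _ _

@[simp]
theorem affineHom_inr (g : GenDihedral Fˣ) : affineHom emb (inr g) = dihedralHom emb g :=
  lift_inr _ _ _ _

theorem affineHom_mk_one_apply (n : Multiplicative (F × F)) (a : Fˣ) (w : K × K) :
    affineHom emb ⟨n, ⟨a, 1⟩⟩ w =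
      (emb a * w.1 + emb (Multiplicative.toAdd n).1,
        emb ↑a⁻¹ * w.2 + emb (Multiplicative.toAdd n).2) := by
  simp [add_comm]

theorem affineHom_mk_zmod2Gen_apply (n : Multiplicative (F × F)) (a : Fˣ) (w : K × K) :
    affineHom emb ⟨n, ⟨a, zmod2Gen⟩⟩ w =
      (emb a * w.2 + emb (Multiplicative.toAdd n).1,
        emb ↑a⁻¹ * w.1 + emb (Multiplicative.toAdd n).2) := by
  simp [add_comm]

theorem affineHom_affine_apply (a : Fˣ) (b d : F) (w : K × K) :
    affineHom emb (PairsSemidirectDihedral.affine (a, b, d)) w =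
      (emb a * w.1 + emb b, emb ↑a⁻¹ * w.2 + emb d) :=
  affineHom_mk_one_apply emb _ a w

theorem affineHom_swap_apply (w : K × K) :
    affineHom emb (PairsSemidirectDihedral.swap F) w = (w.2, w.1) :=
  (affineHom_mk_zmod2Gen_apply emb 1 1 w).trans (by simp)

theorem affineHom_eq_one_of_apply_eq_self {g : PairsSemidirectDihedral F} {x y : K}
    (h₀ : affineHom emb g (x, y) = (x, y)) (h₁ : affineHom emb g (x + 1, y) = (x + 1, y)) :
    g = 1 := by
  obtain ⟨m, a, ε⟩ := g
  rcases eq_one_or_eq_zmod2Gen ε with rfl | rfl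
  · simp only [affineHom_mk_one_apply, Prod.mk.injEq] at h₀ h₁
    have ha : emb a = 1 := by linear_combination h₁.1 - h₀.1
    obtain rfl : a = 1 := Units.ext (emb.injective (by rw [ha, Units.val_one, map_one]))
    have hb : (Multiplicative.toAdd m).1 = 0 := emb.injective (by simpa using h₀.1)
    have hd : (Multiplicative.toAdd m).2 = 0 := emb.injective (by simpa using h₀.2)
    obtain rfl : m = 1 := Multiplicative.toAdd.injective (Prod.ext hb hd)
    rfl
  · simp only [affineHom_mk_zmod2Gen_apply, Prod.mk.injEq] at h₀ h₁
    have hx : (x : K) = x + 1 := h₀.1.symm.trans h₁.1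
    simp at hx

end AffineMaps

open Polynomial in
theorem exists_pow_sub_self_eq {K : Type*} [Field K] [IsAlgClosed K] {q : ℕ} (hq : 1 < q)
    (s : K) : ∃ x : K, x ^ q - x = s := by
  have hpos : 0 < (X ^ q - X : K[X]).degree := by
    rw [degree_eq_natDegree (FiniteField.X_pow_card_sub_X_ne_zero K hq),
      FiniteField.X_pow_card_sub_X_natDegree_eq K hq]
    exact_mod_cast zero_lt_one.trans hq
  have hdeg : (X ^ q - X - C s).degree ≠ 0 := by
    rw [degree_sub_C hpos]
    exact hpos.ne'
  obtain ⟨x, hx⟩ := IsAlgClosed.exists_root _ hdeg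
  exact ⟨x, by simpa [sub_eq_zero] using hx⟩

def artinSchreierCurve (K : Type*) [Field K] (q : ℕ) (c : K) : Set (K × K) :=
  {z | (z.1 ^ q - z.1) * (z.2 ^ q - z.2) = c}

section ArtinSchreierCurve

variable {F K : Type*} [Field F] [Finite F] [Field K] (emb : F →+* K) {p n : ℕ} [Fact p.Prime]
  [CharP K p] (hF : Nat.card F = p ^ n)
include hF

theorem map_mul_add_pow_sub_self (u b : F) (x : K) :
    (emb u * x + emb b) ^ p ^ n - (emb u * x + emb b) = emb u * (x ^ p ^ n - x) := by
  have : Fintype F := Fintype.ofFinite F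
  have hpow (v : F) : emb v ^ p ^ n = emb v := by
    rw [← map_pow, ← hF, Nat.card_eq_fintype_card, FiniteField.pow_card]
  rw [add_pow_char_pow, mul_pow, hpow, hpow]
  ring

theorem affineHom_mem_artinSchreierCurve (c : K) (g : PairsSemidirectDihedral F) {z : K × K}
    (hz : z ∈ artinSchreierCurve K (p ^ n) c) :
    affineHom emb g z ∈ artinSchreierCurve K (p ^ n) c := by
  obtain ⟨m, a, ε⟩ := g
  have hunit : emb a * emb ↑a⁻¹ = 1 := by simp
  rcases eq_one_or_eq_zmod2Gen ε with rfl | rfl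
  · simp only [artinSchreierCurve, Set.mem_ofPred_eq, affineHom_mk_one_apply,
      map_mul_add_pow_sub_self emb hF] at hz ⊢
    linear_combination (emb a * emb ↑a⁻¹) * hz + c * hunit
  · simp only [artinSchreierCurve, Set.mem_ofPred_eq, affineHom_mk_zmod2Gen_apply,
      map_mul_add_pow_sub_self emb hF] at hz ⊢
    linear_combination (emb a * emb ↑a⁻¹) * hz + c * hunit

def curveHom (c : K) : PairsSemidirectDihedral F →* Perm (artinSchreierCurve K (p ^ n) c) :=
  Perm.restrictHom (affineHom emb) _ fun g _ => affineHom_mem_artinSchreierCurve emb hF c g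

theorem curveHom_injective [IsAlgClosed K] (c : K) : Function.Injective (curveHom emb hF c) := by
  have hq : 1 < p ^ n := hF ▸ Finite.one_lt_card
  obtain ⟨x, hx⟩ := exists_pow_sub_self_eq hq (1 : K)
  obtain ⟨y, hy⟩ := exists_pow_sub_self_eq hq c
  have h₀ : (x, y) ∈ artinSchreierCurve K (p ^ n) c := by
    simp [artinSchreierCurve, hx, hy]
  have h₁ : (x + 1, y) ∈ artinSchreierCurve K (p ^ n) c := by
    simpa [artinSchreierCurve, add_pow_char_pow, add_sub_add_right_eq_sub] using h₀
  refine (injective_iff_map_eq_one _).2 fun g hg => ?_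
  have hfix (z) (hz : z ∈ artinSchreierCurve K (p ^ n) c) : affineHom emb g z = z :=
    congrArg Subtype.val (DFunLike.congr_fun hg (⟨z, hz⟩ : artinSchreierCurve K (p ^ n) c))
  exact affineHom_eq_one_of_apply_eq_self emb (hfix _ h₀) (hfix _ h₁)

end ArtinSchreierCurve

theorem artin_schreier_mumford_automorphisms_general {p t : ℕ} [Fact p.Prime] (ht : 1 ≤ t)
    {K : Type*} [Field K] [IsAlgClosed K] [CharP K p]
    (emb : GaloisField p t →+* K) (c : K)
    (C : Set (K × K))
    (hC : C = {z : K × K | (z.1 ^ p ^ t - z.1) * (z.2 ^ p ^ t - z.2) = c}) :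
    ∃ (π : (GaloisField p t)ˣ × GaloisField p t × GaloisField p t → Equiv.Perm C)
      (σ : Equiv.Perm C),
      (∀ (a : (GaloisField p t)ˣ) (b d : GaloisField p t) (z : C),
        ((π (a, b, d) z : K × K)) =
          (emb (a : GaloisField p t) * (z : K × K).1 + emb b,
           emb ((a⁻¹ : (GaloisField p t)ˣ) : GaloisField p t) * (z : K × K).2 + emb d)) ∧
      (∀ z : C, ((σ z : K × K)) = ((z : K × K).2, (z : K × K).1)) ∧
      Nonempty ((Subgroup.closure (Set.range π ∪ {σ})) ≃*
        PairsSemidirectDihedral (GaloisField p t)) ∧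
      Nat.card (Subgroup.closure (Set.range π ∪ {σ})) =
        2 * (p ^ t) ^ 2 * (p ^ t - 1) := by
  have hF : Nat.card (GaloisField p t) = p ^ t := GaloisField.card p t (by omega)
  obtain rfl : C = artinSchreierCurve K (p ^ t) c := hC
  set Φ := curveHom emb hF c
  have hrange : Subgroup.closure (Set.range (Φ ∘ PairsSemidirectDihedral.affine) ∪
      {Φ (PairsSemidirectDihedral.swap _)}) = Φ.range := by
    rw [Set.range_comp, ← Set.image_singleton, ← Set.image_union, ← MonoidHom.map_closure,
      PairsSemidirectDihedral.closure_range_affine_union_swap, ← MonoidHom.range_eq_map]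
  let e := (MulEquiv.subgroupCongr hrange).trans
    (MonoidHom.ofInjective (curveHom_injective emb hF c)).symm
  refine ⟨Φ ∘ PairsSemidirectDihedral.affine, Φ (PairsSemidirectDihedral.swap _),
    fun a b d z => ?_, fun z => ?_, ⟨e⟩, ?_⟩
  · exact affineHom_affine_apply emb a b d z
  · exact affineHom_swap_apply emb z
  · rw [Nat.card_congr e.toEquiv, PairsSemidirectDihedral.card, hF]

/-- explicit automorphisms of the Artin–Schreier–Mumford curve, used in the
proof of Proposition 3: let `q = p^t`, `K ⊇ F_q` algebraically closed of characteristic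
`p`, `c ∈ K` nonzero, and `C = {(x,y) : (x^q−x)(y^q−y) = c}`.  Each map
`(x,y) ↦ (αx+β, α⁻¹y+δ)` (`α ∈ F_q^*`, `β,δ ∈ F_q`) and the map `(x,y) ↦ (y,x)` restricts
to a permutation of `C`, and the subgroup of `Perm C` generated by these permutations is
isomorphic to `(F_q × F_q) ⋊ D_{q−1}`; in particular it has order `2q²(q−1)`. -/
theorem artin_schreier_mumford_automorphisms {p t : ℕ} [Fact p.Prime] (ht : 1 ≤ t)
    {K : Type*} [Field K] [IsAlgClosed K] [CharP K p]
    (emb : GaloisField p t →+* K) (c : K) (hc : c ≠ 0)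
    (C : Set (K × K))
    (hC : C = {z : K × K | (z.1 ^ p ^ t - z.1) * (z.2 ^ p ^ t - z.2) = c}) :
    ∃ (π : (GaloisField p t)ˣ × GaloisField p t × GaloisField p t → Equiv.Perm C)
      (σ : Equiv.Perm C),
      (∀ (a : (GaloisField p t)ˣ) (b d : GaloisField p t) (z : C),
        ((π (a, b, d) z : K × K)) =
          (emb (a : GaloisField p t) * (z : K × K).1 + emb b,
           emb ((a⁻¹ : (GaloisField p t)ˣ) : GaloisField p t) * (z : K × K).2 + emb d)) ∧
      (∀ z : C, ((σ z : K × K)) = ((z : K × K).2, (z : K × K).1)) ∧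
      Nonempty ((Subgroup.closure (Set.range π ∪ {σ})) ≃*
        PairsSemidirectDihedral (GaloisField p t)) ∧
      Nat.card (Subgroup.closure (Set.range π ∪ {σ})) =
        2 * (p ^ t) ^ 2 * (p ^ t - 1) :=
  artin_schreier_mumford_automorphisms_general ht emb c C hC
end
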